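/- arXiv:2502.19147 — 12 statements merged into one kernel-verified Lean document; each statement's English description precedes it below -/
import Mathlib

section
/- Let X be a type, F the free group on X, and Y a subset of F. Let Q be the group presented by the generating set F × Y subject to the relations (f,y)·(f',y')·(f,y)⁻¹ = (f*y*f⁻¹*f', y') for all f, f' ∈ F and y, y' ∈ Y, and let φ : Q →* F be the homomorphism determined by sending the generator (f,y) to f*y*f⁻¹ (this assignment respects the relations, so φ is well defined). Then the kernel of φ is contained in the center of Q. -/
/-- The relators `(f,y)·(f',y')·(f,y)⁻¹·(f·y·f⁻¹·f', y')⁻¹` on the generating set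
`F × Y`, where `F` is the free group on `X` and `Y ⊆ F`. -/
def QRels (X : Type*) (Y : Set (FreeGroup X)) : Set (FreeGroup (FreeGroup X × Y)) :=
  {z | ∃ (f f' : FreeGroup X) (y y' : Y),
    z = FreeGroup.of (f, y) * FreeGroup.of (f', y') * (FreeGroup.of (f, y))⁻¹ *
        (FreeGroup.of (f * (y : FreeGroup X) * f⁻¹ * f', y'))⁻¹}

theorem qrel (X : Type*) (Y : Set (FreeGroup X)) (f f' : FreeGroup X) (y y' : Y) :
    PresentedGroup.of (rels := QRels X Y) (f, y) * PresentedGroup.of (f', y') *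
      (PresentedGroup.of (f, y))⁻¹ =
    PresentedGroup.of (f * (y : FreeGroup X) * f⁻¹ * f', y') := by
  have hr : (FreeGroup.of (f, y) * FreeGroup.of (f', y') * (FreeGroup.of (f, y))⁻¹ *
      (FreeGroup.of (f * (y : FreeGroup X) * f⁻¹ * f', y'))⁻¹ : FreeGroup (FreeGroup X × Y))
      ∈ Subgroup.normalClosure (QRels X Y) :=
    Subgroup.subset_normalClosure ⟨f, f', y, y', rfl⟩
  have h1 : (PresentedGroup.mk (QRels X Y)) (FreeGroup.of (f, y) * FreeGroup.of (f', y') *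
      (FreeGroup.of (f, y))⁻¹ * (FreeGroup.of (f * (y : FreeGroup X) * f⁻¹ * f', y'))⁻¹) = 1 :=
    (QuotientGroup.eq_one_iff _).2 hr
  simp only [map_mul, map_inv] at h1
  have := mul_eq_one_iff_eq_inv.1 h1
  simpa [PresentedGroup.of] using this

theorem conj_of (X : Type*) (Y : Set (FreeGroup X))
    (φ : PresentedGroup (QRels X Y) →* FreeGroup X)
    (hφ : ∀ (f : FreeGroup X) (y : Y),
      φ (PresentedGroup.of (f, y)) = f * (y : FreeGroup X) * f⁻¹)
    (q : PresentedGroup (QRels X Y)) (f' : FreeGroup X) (y' : Y) :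
    q * PresentedGroup.of (f', y') * q⁻¹ = PresentedGroup.of (φ q * f', y') := by
  have : q ∈ Subgroup.closure (Set.range (PresentedGroup.of (rels := QRels X Y))) := by
    rw [PresentedGroup.closure_range_of]; trivial
  induction this using Subgroup.closure_induction generalizing f' y' with
  | one => simp
  | mem g hg =>
    obtain ⟨⟨f, y⟩, rfl⟩ := hg
    rw [qrel, hφ]
  | mul a b _ _ ha hb =>
    have := ha (φ b * f') y'
    rw [← hb f' y'] at this
    rw [mul_inv_rev, map_mul]
    calc a * b * PresentedGroup.of (f', y') * (b⁻¹ * a⁻¹)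
        = a * (b * PresentedGroup.of (f', y') * b⁻¹) * a⁻¹ := by group
      _ = PresentedGroup.of (φ a * (φ b * f'), y') := this
      _ = PresentedGroup.of (φ a * φ b * f', y') := by rw [mul_assoc]
  | inv a _ ha =>
    have := ha ((φ a)⁻¹ * f') y'
    rw [mul_inv_cancel_left] at this
    rw [map_inv, inv_inv]
    calc a⁻¹ * PresentedGroup.of (f', y') * a
        = a⁻¹ * (a * PresentedGroup.of ((φ a)⁻¹ * f', y') * a⁻¹) * a := by rw [this]
      _ = PresentedGroup.of ((φ a)⁻¹ * f', y') := by group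

/-- Lemma 1.6 of the paper: the kernel of the homomorphism
`φ : Q → F`, `(f,y) ↦ f·y·f⁻¹`, is contained in the center of `Q`. -/
theorem ker_le_center (X : Type*) (Y : Set (FreeGroup X))
    (φ : PresentedGroup (QRels X Y) →* FreeGroup X)
    (hφ : ∀ (f : FreeGroup X) (y : Y),
      φ (PresentedGroup.of (f, y)) = f * (y : FreeGroup X) * f⁻¹) :
    φ.ker ≤ Subgroup.center (PresentedGroup (QRels X Y)) := by
  intro q hq
  rw [MonoidHom.mem_ker] at hq
  rw [Subgroup.mem_center_iff]
  intro g
  have hgen : ∀ (f' : FreeGroup X) (y' : Y),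
      q * PresentedGroup.of (f', y') = PresentedGroup.of (f', y') * q := by
    intro f' y'
    have := conj_of X Y φ hφ q f' y'
    rw [hq, one_mul] at this
    calc q * PresentedGroup.of (f', y') = q * PresentedGroup.of (f', y') * q⁻¹ * q := by group
      _ = PresentedGroup.of (f', y') * q := by rw [this]
  have : g ∈ Subgroup.closure (Set.range (PresentedGroup.of (rels := QRels X Y))) := by
    rw [PresentedGroup.closure_range_of]; trivial
  induction this using Subgroup.closure_induction with
  | one => simp
  | mem g hg => obtain ⟨⟨f, y⟩, rfl⟩ := hg; exact (hgen f y).symm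
  | mul a b _ _ ha hb => rw [mul_assoc, hb, ← mul_assoc, ha, mul_assoc]
  | inv a _ ha =>
    calc a⁻¹ * q = a⁻¹ * q * a * a⁻¹ := by group
      _ = a⁻¹ * (q * a) * a⁻¹ := by group
      _ = a⁻¹ * (a * q) * a⁻¹ := by rw [← ha]
      _ = q * a⁻¹ := by group
end

section
/- Let X be a type, F the free group on X, and Y a subset of F. Let Q be the group presented by the generating set F × Y subject to the relations (f,y)·(f',y')·(f,y)⁻¹ = (f*y*f⁻¹*f', y') for all f, f' ∈ F and y, y' ∈ Y. Let G be a group and p : F →* G a surjective homomorphism whose kernel equals the normal closure of Y in F. Then the abelianization of Q is a free abelian group on G × Y: there is an isomorphism of abelian groups from the abelianization of Q to the finitely supported functions (G × Y) →₀ ℤ which sends the class of the generator (f,y) to the basis element indexed by (p f, y). -/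
section Aux

variable {X : Type*} {Y : Set (FreeGroup X)}

/-- the class of the generator `(f, y)` in the abelianization of `Q`. -/
def cQ (f : FreeGroup X) (y : Y) : Abelianization (PresentedGroup (QRels X Y)) :=
  Abelianization.of (PresentedGroup.of (f, y))

theorem cQ_rel (f f' : FreeGroup X) (y y' : Y) :
    cQ (f * (y : FreeGroup X) * f⁻¹ * f') y' = cQ f' y' := by
  have hrel : (PresentedGroup.of (f, y) : PresentedGroup (QRels X Y)) *
      PresentedGroup.of (f', y') * (PresentedGroup.of (f, y))⁻¹ *
      (PresentedGroup.of (f * (y : FreeGroup X) * f⁻¹ * f', y'))⁻¹ = 1 := by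
    have hmem : (FreeGroup.of (f, y) * FreeGroup.of (f', y') * (FreeGroup.of (f, y))⁻¹ *
        (FreeGroup.of (f * (y : FreeGroup X) * f⁻¹ * f', y'))⁻¹ :
        FreeGroup (FreeGroup X × Y)) ∈ Subgroup.normalClosure (QRels X Y) :=
      Subgroup.subset_normalClosure ⟨f, f', y, y', rfl⟩
    have := (QuotientGroup.eq_one_iff _).2 hmem
    exact this
  have h2 : (PresentedGroup.of (f * (y : FreeGroup X) * f⁻¹ * f', y') :
      PresentedGroup (QRels X Y)) =
      PresentedGroup.of (f, y) * PresentedGroup.of (f', y') * (PresentedGroup.of (f, y))⁻¹ :=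
    (mul_inv_eq_one.1 hrel).symm
  unfold cQ
  rw [h2]
  simp [map_mul, map_inv, mul_comm, mul_assoc, mul_left_comm]

theorem cQ_norm (n : FreeGroup X) (hn : n ∈ Subgroup.normalClosure Y)
    (f : FreeGroup X) (y : Y) : cQ (n * f) y = cQ f y := by
  revert f
  refine Subgroup.closure_induction (fun x hx f => ?_) (fun f => by simp)
    (fun a b _ _ iha ihb f => ?_) (fun a _ iha f => ?_) hn
  · rcases Group.mem_conjugatesOfSet_iff.1 hx with ⟨a, ha, hconj⟩
    rcases isConj_iff.1 hconj with ⟨c, hc⟩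
    have : x * f = c * (⟨a, ha⟩ : Y) * c⁻¹ * f := by rw [hc]
    rw [this, cQ_rel c f ⟨a, ha⟩ y]
  · rw [mul_assoc, iha, ihb]
  · have := iha (a⁻¹ * f)
    rw [← mul_assoc, mul_inv_cancel, one_mul] at this
    rw [this]

end Aux

/-- If `p : F → G` is surjective with kernel the normal closure of `Y`, then the
abelianization of `Q = Q(G)` is free abelian on `G × Y`: there is an isomorphism of
abelian groups sending the class of the generator `(f,y)` to the basis element
indexed by `(p f, y)`. -/
theorem abelianization_of_Q_free (X : Type*) (Y : Set (FreeGroup X))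
    (G : Type*) [Group G] (p : FreeGroup X →* G)
    (hsurj : Function.Surjective p)
    (hker : p.ker = Subgroup.normalClosure Y) :
    ∃ e : Additive (Abelianization (PresentedGroup (QRels X Y))) ≃+ ((G × Y) →₀ ℤ),
      ∀ (f : FreeGroup X) (y : Y),
        e (Additive.ofMul (Abelianization.of (PresentedGroup.of (f, y)))) =
          Finsupp.single (p f, y) 1 := by
  classical
  have hpy : ∀ y : Y, p (y : FreeGroup X) = 1 := fun y => by
    have : (y : FreeGroup X) ∈ p.ker := hker ▸ Subgroup.subset_normalClosure y.2
    exact this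
  -- forward map
  set φgen : FreeGroup X × Y → Multiplicative ((G × Y) →₀ ℤ) :=
    fun z => Multiplicative.ofAdd (Finsupp.single (p z.1, z.2) (1 : ℤ)) with hφgen
  have hrels : ∀ r ∈ QRels X Y, FreeGroup.lift φgen r = 1 := by
    rintro r ⟨f, f', y, y', rfl⟩
    have h1 : p (f * (y : FreeGroup X) * f⁻¹ * f') = p f' := by
      simp [map_mul, hpy y, map_inv]
    simp only [map_mul, map_inv, FreeGroup.lift_apply_of, hφgen, h1]
    rw [show ∀ a b : Multiplicative ((G × Y) →₀ ℤ), a * b * a⁻¹ * b⁻¹ = 1 by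
      intro a b; rw [mul_comm a b]; group]
  set φ : PresentedGroup (QRels X Y) →* Multiplicative ((G × Y) →₀ ℤ) :=
    PresentedGroup.toGroup hrels with hφ
  set φ' := Abelianization.lift φ with hφ'
  set e₁ : Additive (Abelianization (PresentedGroup (QRels X Y))) →+ ((G × Y) →₀ ℤ) :=
    MonoidHom.toAdditiveLeft φ' with he₁
  have he₁cQ : ∀ (f : FreeGroup X) (y : Y),
      e₁ (Additive.ofMul (cQ f y)) = Finsupp.single (p f, y) 1 := by
    intro f y
    show Multiplicative.toAdd (φ' (cQ f y)) = _
    rw [hφ']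
    unfold cQ
    rw [Abelianization.lift_apply_of, hφ, PresentedGroup.toGroup.of]
    rfl
  -- section of p
  set s : G → FreeGroup X := Function.surjInv hsurj with hs
  have hps : ∀ g, p (s g) = g := fun g => Function.surjInv_eq hsurj g
  have hcQp : ∀ (f f' : FreeGroup X) (y : Y), p f = p f' → cQ f y = cQ f' y := by
    intro f f' y h
    have hmem : f * f'⁻¹ ∈ Subgroup.normalClosure Y := by
      rw [← hker]
      simp [MonoidHom.mem_ker, map_mul, map_inv, h]
    have := cQ_norm (f * f'⁻¹) hmem f' y
    simpa using this
  -- backward map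
  set ψ : ((G × Y) →₀ ℤ) →+ Additive (Abelianization (PresentedGroup (QRels X Y))) :=
    Finsupp.liftAddHom (fun gy =>
      zmultiplesHom _ (Additive.ofMul (cQ (s gy.1) gy.2))) with hψ
  have hψsingle : ∀ (g : G) (y : Y),
      ψ (Finsupp.single (g, y) 1) = Additive.ofMul (cQ (s g) y) := by
    intro g y
    rw [hψ, Finsupp.liftAddHom_apply_single]
    simp
  -- ψ ∘ e₁ = id
  have hleft : ∀ a, ψ (e₁ a) = a := by
    intro a
    have key : (AddMonoidHom.toMultiplicativeRight (ψ.comp e₁) :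
        Abelianization (PresentedGroup (QRels X Y)) →*
        Multiplicative (Additive (Abelianization (PresentedGroup (QRels X Y))))) =
        AddMonoidHom.toMultiplicativeRight (AddMonoidHom.id _) := by
      apply Abelianization.hom_ext
      apply PresentedGroup.ext
      rintro ⟨f, y⟩
      show Multiplicative.ofAdd (ψ (e₁ (Additive.ofMul (cQ f y)))) = _
      rw [he₁cQ, hψsingle]
      have : cQ (s (p f)) y = cQ f y := hcQp _ _ _ (hps (p f))
      rw [this]
      rfl
    have := congrArg (fun h => Multiplicative.toAdd
      ((h : Abelianization (PresentedGroup (QRels X Y)) →* _) (Additive.toMul a))) key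
    simpa using this
  -- e₁ ∘ ψ = id
  have hright : ∀ v, e₁ (ψ v) = v := by
    intro v
    have key : e₁.comp ψ = AddMonoidHom.id _ := by
      apply Finsupp.addHom_ext
      rintro ⟨g, y⟩ n
      have h1 : e₁ (ψ (Finsupp.single (g, y) 1)) = Finsupp.single (g, y) 1 := by
        rw [hψsingle, he₁cQ, hps]
      have : Finsupp.single ((g, y) : G × Y) (n : ℤ) = n • Finsupp.single (g, y) (1 : ℤ) := by
        simp [Finsupp.smul_single]
      simp only [AddMonoidHom.coe_comp, Function.comp_apply, AddMonoidHom.id_apply, this,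
        map_zsmul, h1]
    exact DFunLike.congr_fun key v
  exact ⟨AddEquiv.mk ⟨⇑e₁, ⇑ψ, hleft, hright⟩ e₁.map_add, he₁cQ⟩
end

section
/- Let X be a type, F the free group on X, G a group, and p : F →* G a surjective group homomorphism with kernel R. Let ∂ : F → (X →₀ MonoidAlgebra ℤ G) be the Fox derivative: the unique function with ∂(1) = 0, ∂(FreeGroup.of x) = single x 1 for x ∈ X, and ∂(w*w') = ∂w + p(w)•∂w' for all w, w' ∈ F (where p(w)•(−) is the ℤ[G]-scalar action by p(w)). Then: (i) the restriction of ∂ to R is a group homomorphism from R to the additive group X →₀ ℤ[G]; (ii) the induced homomorphism from the abelianization of R is injective; (iii) its range equals the kernel of the ℤ[G]-linear map ∂₁ : (X →₀ ℤ[G]) → ℤ[G] determined by ∂₁(single x 1) = p(FreeGroup.of x) − 1. -/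
open Finsupp

namespace FoxAux

variable {X : Type*} {G : Type*} [Group G]

section basic
variable (p : FreeGroup X →* G) (d : FreeGroup X → (X →₀ MonoidAlgebra ℤ G))

theorem fox_inv (hd1 : d 1 = 0)
    (hdmul : ∀ w w', d (w * w') = d w + (MonoidAlgebra.of ℤ G (p w)) • d w')
    (w : FreeGroup X) : (MonoidAlgebra.of ℤ G (p w)) • d w⁻¹ = - d w := by
  have h := hdmul w w⁻¹
  rw [mul_inv_cancel, hd1] at h
  exact eq_neg_of_add_eq_zero_right h.symm

theorem fox_inv' (hd1 : d 1 = 0)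
    (hdmul : ∀ w w', d (w * w') = d w + (MonoidAlgebra.of ℤ G (p w)) • d w')
    (w : FreeGroup X) : d w⁻¹ = - (MonoidAlgebra.of ℤ G (p w⁻¹)) • d w := by
  have h := fox_inv p d hd1 hdmul w
  calc d w⁻¹ = (MonoidAlgebra.of ℤ G (p w⁻¹)) • ((MonoidAlgebra.of ℤ G (p w)) • d w⁻¹) := by
        rw [smul_smul, ← map_mul, ← map_mul, inv_mul_cancel, map_one, map_one, one_smul]
    _ = - (MonoidAlgebra.of ℤ G (p w⁻¹)) • d w := by rw [h, smul_neg, neg_smul]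

theorem fox_conj (hd1 : d 1 = 0)
    (hdmul : ∀ w w', d (w * w') = d w + (MonoidAlgebra.of ℤ G (p w)) • d w')
    (w r : FreeGroup X) (hr : p r = 1) :
    d (w * r * w⁻¹) = (MonoidAlgebra.of ℤ G (p w)) • d r := by
  rw [hdmul (w * r) w⁻¹, hdmul w r, map_mul, hr, mul_one, fox_inv p d hd1 hdmul w]
  abel

end basic

section d1
variable (p : FreeGroup X →* G) (d : FreeGroup X → (X →₀ MonoidAlgebra ℤ G))
  (d₁ : (X →₀ MonoidAlgebra ℤ G) →ₗ[MonoidAlgebra ℤ G] MonoidAlgebra ℤ G)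

theorem fox_d1d (hd1 : d 1 = 0)
    (hdof : ∀ x : X, d (FreeGroup.of x) = Finsupp.single x 1)
    (hdmul : ∀ w w', d (w * w') = d w + (MonoidAlgebra.of ℤ G (p w)) • d w')
    (hd₁ : ∀ x : X, d₁ (Finsupp.single x 1) = MonoidAlgebra.of ℤ G (p (FreeGroup.of x)) - 1)
    (w : FreeGroup X) : d₁ (d w) = MonoidAlgebra.of ℤ G (p w) - 1 := by
  induction w using FreeGroup.induction_on with
  | C1 => simp [hd1, MonoidAlgebra.one_def]
  | of x =>
      show d₁ (d (FreeGroup.of x)) = MonoidAlgebra.of ℤ G (p (FreeGroup.of x)) - 1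
      rw [hdof, hd₁]
  | inv_of x ih =>
      rw [fox_inv' p d hd1 hdmul, map_smul, smul_eq_mul, ih, neg_mul, mul_sub, mul_one,
        ← map_mul, ← map_mul, inv_mul_cancel, map_one, map_one, neg_sub]
  | mul w w' ihw ihw' =>
      rw [hdmul, map_add, map_smul, ihw, ihw', smul_eq_mul, mul_sub, ← map_mul, ← map_mul,
        mul_one]
      abel

end d1



section trans
variable (p : FreeGroup X →* G) (hsurj : Function.Surjective p)

open Classical in
noncomputable def foxT : G → FreeGroup X := fun g =>
  if g = 1 then 1 else Function.surjInv hsurj g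

theorem foxT_spec (g : G) : p (foxT p hsurj g) = g := by
  unfold foxT
  split
  · simp [*]
  · exact Function.surjInv_eq hsurj g

theorem foxT_one : foxT p hsurj 1 = 1 := by simp [foxT]

noncomputable def foxRho (g : G) (x : X) : FreeGroup X :=
  foxT p hsurj g * FreeGroup.of x * (foxT p hsurj (g * p (FreeGroup.of x)))⁻¹

noncomputable def foxDelta (g h : G) : FreeGroup X :=
  foxT p hsurj g * foxT p hsurj h * (foxT p hsurj (g * h))⁻¹

theorem foxRho_mem (g : G) (x : X) : foxRho p hsurj g x ∈ p.ker := by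
  simp [foxRho, MonoidHom.mem_ker, foxT_spec]

theorem foxDelta_mem (g h : G) : foxDelta p hsurj g h ∈ p.ker := by
  simp [foxDelta, MonoidHom.mem_ker, foxT_spec]

theorem foxDelta_one_right (g : G) : foxDelta p hsurj g 1 = 1 := by
  simp [foxDelta, foxT_one]

abbrev FoxA : Type _ := Additive (Abelianization ↥p.ker)

noncomputable def foxAb (r : ↥p.ker) : FoxA p := Additive.ofMul (Abelianization.of r)

theorem foxAb_mul (u v : ↥p.ker) : foxAb p (u * v) = foxAb p u + foxAb p v := by
  simp [foxAb, map_mul]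

theorem foxAb_one : foxAb p (1 : ↥p.ker) = 0 := by simp [foxAb]

noncomputable def foxAlpha : (X →₀ MonoidAlgebra ℤ G) →+ FoxA p :=
  Finsupp.liftAddHom fun x => (Finsupp.liftAddHom fun g =>
    zmultiplesHom _ (foxAb p ⟨foxRho p hsurj g x, foxRho_mem p hsurj g x⟩)).comp
      (MonoidAlgebra.coeffAddEquiv (R := ℤ) (M := G)).toAddMonoidHom

theorem foxAlpha_single (x : X) (g : G) :
    foxAlpha p hsurj (Finsupp.single x (MonoidAlgebra.single g (1 : ℤ))) =
      foxAb p ⟨foxRho p hsurj g x, foxRho_mem p hsurj g x⟩ := by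
  unfold foxAlpha
  erw [Finsupp.liftAddHom_apply_single, AddMonoidHom.comp_apply, Finsupp.liftAddHom_apply_single]
  exact one_zsmul _

noncomputable def foxDel (g : G) : MonoidAlgebra ℤ G →+ FoxA p :=
  (Finsupp.liftAddHom fun h =>
    zmultiplesHom _ (foxAb p ⟨foxDelta p hsurj g h, foxDelta_mem p hsurj g h⟩)).comp
      (MonoidAlgebra.coeffAddEquiv (R := ℤ) (M := G)).toAddMonoidHom

theorem foxDel_single (g h : G) :
    foxDel p hsurj g (MonoidAlgebra.single h (1 : ℤ)) =
      foxAb p ⟨foxDelta p hsurj g h, foxDelta_mem p hsurj g h⟩ := by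
  unfold foxDel
  erw [AddMonoidHom.comp_apply, Finsupp.liftAddHom_apply_single]
  exact one_zsmul _

theorem foxAb_delta_one (g : G) :
    foxAb p ⟨foxDelta p hsurj g 1, foxDelta_mem p hsurj g 1⟩ = 0 := by
  have h : (⟨foxDelta p hsurj g 1, foxDelta_mem p hsurj g 1⟩ : ↥p.ker) = 1 :=
    Subtype.ext (foxDelta_one_right p hsurj g)
  rw [h, foxAb_one]

noncomputable def foxConjHom (f : FreeGroup X) : ↥p.ker →* ↥p.ker where
  toFun r := ⟨f * r * f⁻¹, (MonoidHom.normal_ker p).conj_mem r.1 r.2 f⟩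
  map_one' := by ext; simp
  map_mul' a b := by
    ext
    show f * (↑a * ↑b) * f⁻¹ = (f * ↑a * f⁻¹) * (f * ↑b * f⁻¹)
    group

noncomputable def foxC (f : FreeGroup X) : FoxA p →+ FoxA p :=
  MonoidHom.toAdditive (Abelianization.map (foxConjHom p f))

theorem foxC_ab (f : FreeGroup X) (r : ↥p.ker) :
    foxC p f (foxAb p r) = foxAb p ⟨f * r * f⁻¹, (MonoidHom.normal_ker p).conj_mem r.1 r.2 f⟩ := by
  rfl

theorem foxC_inj (f : FreeGroup X) : Function.Injective (foxC p f) := by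
  have key : (Abelianization.map (foxConjHom p f⁻¹)).comp (Abelianization.map (foxConjHom p f))
      = MonoidHom.id _ := by
    apply Abelianization.hom_ext
    ext r
    show Abelianization.of ((foxConjHom p f⁻¹) ((foxConjHom p f) r)) = Abelianization.of r
    congr 1
    ext
    show f⁻¹ * (f * ↑r * f⁻¹) * f⁻¹⁻¹ = ↑r
    group
  intro a b hab
  have := congrArg (Abelianization.map (foxConjHom p f⁻¹)) (congrArg Additive.toMul hab)
  simpa [foxC, ← MonoidHom.comp_apply, key] using this

end trans

section main
variable (p : FreeGroup X →* G) (hsurj : Function.Surjective p)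
  (d : FreeGroup X → (X →₀ MonoidAlgebra ℤ G))
  (d₁ : (X →₀ MonoidAlgebra ℤ G) →ₗ[MonoidAlgebra ℤ G] MonoidAlgebra ℤ G)

theorem of_apply' (g : G) : MonoidAlgebra.of ℤ G g = MonoidAlgebra.single g (1 : ℤ) := rfl

theorem fox_E1
    (hd₁ : ∀ x : X, d₁ (Finsupp.single x 1) = MonoidAlgebra.of ℤ G (p (FreeGroup.of x)) - 1)
    (g : G) (m : X →₀ MonoidAlgebra ℤ G) :
    foxAlpha p hsurj (MonoidAlgebra.of ℤ G g • m)
      = foxC p (foxT p hsurj g) (foxAlpha p hsurj m) + foxDel p hsurj g (d₁ m) := by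
  have key : (foxAlpha p hsurj).comp
        (DistribMulAction.toAddMonoidHom (X →₀ MonoidAlgebra ℤ G)
          (MonoidAlgebra.of ℤ G g))
      = ((foxC p (foxT p hsurj g)).comp (foxAlpha p hsurj))
          + ((foxDel p hsurj g).comp d₁.toAddMonoidHom) := by
    ext x h
    show foxAlpha p hsurj (MonoidAlgebra.of ℤ G g •
          (Finsupp.single x (MonoidAlgebra.single h (1 : ℤ))))
        = foxC p (foxT p hsurj g)
            (foxAlpha p hsurj (Finsupp.single x (MonoidAlgebra.single h (1 : ℤ))))
          + foxDel p hsurj g (d₁ (Finsupp.single x (MonoidAlgebra.single h (1 : ℤ))))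
    have step1 : MonoidAlgebra.of ℤ G g •
          (Finsupp.single x (MonoidAlgebra.single h (1 : ℤ)) : X →₀ MonoidAlgebra ℤ G)
        = Finsupp.single x (MonoidAlgebra.single (g * h) (1 : ℤ)) := by
      rw [Finsupp.smul_single, smul_eq_mul, of_apply', MonoidAlgebra.single_mul_single, one_mul]
    have step2 : d₁ (Finsupp.single x (MonoidAlgebra.single h (1 : ℤ)))
        = MonoidAlgebra.single (h * p (FreeGroup.of x)) (1 : ℤ) - MonoidAlgebra.single h 1 := by
      have e : (Finsupp.single x (MonoidAlgebra.single h (1 : ℤ)) : X →₀ MonoidAlgebra ℤ G)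
          = (MonoidAlgebra.single h (1 : ℤ)) • Finsupp.single x (1 : MonoidAlgebra ℤ G) := by
        rw [Finsupp.smul_single, smul_eq_mul, mul_one]
      rw [e, map_smul, hd₁, smul_eq_mul, mul_sub, mul_one, of_apply',
        MonoidAlgebra.single_mul_single, mul_one]
    rw [step1, step2, foxAlpha_single, foxAlpha_single, foxC_ab, map_sub,
      foxDel_single, foxDel_single]
    have habel : ∀ a b c e : FoxA p, e + a = b + c → a = b + (c - e) := by
      intro a b c e hh
      have : a = -e + (e + a) := by abel
      rw [this, hh]; abel
    apply habel
    rw [← foxAb_mul, ← foxAb_mul]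
    congr 1
    apply Subtype.ext
    show foxDelta p hsurj g h * foxRho p hsurj (g * h) x
        = (foxT p hsurj g * foxRho p hsurj h x * (foxT p hsurj g)⁻¹)
            * foxDelta p hsurj g (h * p (FreeGroup.of x))
    unfold foxRho foxDelta
    simp only [mul_assoc]
    group
  have := DFunLike.congr_fun key m
  simpa using this

theorem fox_memQ (w : FreeGroup X) : w * (foxT p hsurj (p w))⁻¹ ∈ p.ker := by
  simp [MonoidHom.mem_ker, foxT_spec]

theorem fox_Q (hd1 : d 1 = 0)
    (hdof : ∀ x : X, d (FreeGroup.of x) = Finsupp.single x 1)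
    (hdmul : ∀ w w', d (w * w') = d w + (MonoidAlgebra.of ℤ G (p w)) • d w')
    (hd₁ : ∀ x : X, d₁ (Finsupp.single x 1) = MonoidAlgebra.of ℤ G (p (FreeGroup.of x)) - 1)
    (w : FreeGroup X) :
    foxAlpha p hsurj (d w) = foxAb p ⟨w * (foxT p hsurj (p w))⁻¹, fox_memQ p hsurj w⟩ := by
  have hinv : ∀ w : FreeGroup X,
      foxAlpha p hsurj (d w) = foxAb p ⟨w * (foxT p hsurj (p w))⁻¹, fox_memQ p hsurj w⟩ →
      foxAlpha p hsurj (d w⁻¹)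
        = foxAb p ⟨w⁻¹ * (foxT p hsurj (p w⁻¹))⁻¹, fox_memQ p hsurj w⁻¹⟩ := by
    intro w hw
    apply foxC_inj p (foxT p hsurj (p w))
    rw [foxC_ab]
    have e1 := fox_E1 p hsurj d₁ hd₁ (p w) (d w⁻¹)
    rw [fox_inv p d hd1 hdmul w, map_neg, hw,
      fox_d1d p d d₁ hd1 hdof hdmul hd₁ w⁻¹] at e1
    have e2 : foxDel p hsurj (p w) (MonoidAlgebra.of ℤ G (p w⁻¹) - 1)
        = foxAb p ⟨foxDelta p hsurj (p w) (p w⁻¹),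
            foxDelta_mem p hsurj (p w) (p w⁻¹)⟩ := by
      rw [of_apply', MonoidAlgebra.one_def, map_sub, foxDel_single, foxDel_single,
        foxAb_delta_one, sub_zero]
    rw [e2] at e1
    -- e1 : -(foxAb ⟨w * T(pw)⁻¹⟩) = foxC (T pw) (foxAlpha (d w⁻¹)) + foxAb ⟨δ (pw) (pw⁻¹)⟩
    have e3 := eq_sub_of_add_eq e1.symm
    rw [e3]
    have goal0 : foxAb p ⟨w * (foxT p hsurj (p w))⁻¹, fox_memQ p hsurj w⟩
        + foxAb p ⟨foxT p hsurj (p w) * (w⁻¹ * (foxT p hsurj (p w⁻¹))⁻¹) * (foxT p hsurj (p w))⁻¹,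
            (MonoidHom.normal_ker p).conj_mem _ (fox_memQ p hsurj w⁻¹) _⟩
        + foxAb p ⟨foxDelta p hsurj (p w) (p w⁻¹), foxDelta_mem p hsurj (p w) (p w⁻¹)⟩ = 0 := by
      rw [← foxAb_mul, ← foxAb_mul]
      have : (⟨w * (foxT p hsurj (p w))⁻¹, fox_memQ p hsurj w⟩
          * ⟨foxT p hsurj (p w) * (w⁻¹ * (foxT p hsurj (p w⁻¹))⁻¹) * (foxT p hsurj (p w))⁻¹,
              (MonoidHom.normal_ker p).conj_mem _ (fox_memQ p hsurj w⁻¹) _⟩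
          * ⟨foxDelta p hsurj (p w) (p w⁻¹), foxDelta_mem p hsurj (p w) (p w⁻¹)⟩ : ↥p.ker)
          = 1 := by
        apply Subtype.ext
        show (w * (foxT p hsurj (p w))⁻¹)
            * (foxT p hsurj (p w) * (w⁻¹ * (foxT p hsurj (p w⁻¹))⁻¹) * (foxT p hsurj (p w))⁻¹)
            * foxDelta p hsurj (p w) (p w⁻¹) = 1
        unfold foxDelta
        have hc : p w * p w⁻¹ = 1 := by rw [map_inv, mul_inv_cancel]
        rw [hc, foxT_one]
        group
      rw [this, foxAb_one]
    have := goal0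
    -- rearrange
    have final : foxAb p ⟨foxT p hsurj (p w) * (w⁻¹ * (foxT p hsurj (p w⁻¹))⁻¹)
          * (foxT p hsurj (p w))⁻¹,
          (MonoidHom.normal_ker p).conj_mem _ (fox_memQ p hsurj w⁻¹) _⟩
        = - foxAb p ⟨w * (foxT p hsurj (p w))⁻¹, fox_memQ p hsurj w⟩
          - foxAb p ⟨foxDelta p hsurj (p w) (p w⁻¹), foxDelta_mem p hsurj (p w) (p w⁻¹)⟩ := by
      have h0 := goal0
      have : ∀ a b c : FoxA p, a + b + c = 0 → b = -a - c := by
        intro a b c hh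
        have : b = -a + (a + b + c) - c := by abel
        rw [this, hh]; abel
      exact this _ _ _ h0
    exact final.symm
  induction w using FreeGroup.induction_on with
  | C1 =>
      rw [hd1, map_zero]
      have : (⟨(1 : FreeGroup X) * (foxT p hsurj (p 1))⁻¹, fox_memQ p hsurj 1⟩ : ↥p.ker)
          = 1 := by
        apply Subtype.ext
        show (1 : FreeGroup X) * (foxT p hsurj (p 1))⁻¹ = 1
        rw [map_one, foxT_one]; group
      rw [this, foxAb_one]
  | of x =>
      show foxAlpha p hsurj (d (FreeGroup.of x)) = _
      rw [hdof, MonoidAlgebra.one_def, foxAlpha_single]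
      congr 1
      apply Subtype.ext
      show foxRho p hsurj 1 x = FreeGroup.of x * (foxT p hsurj (p (FreeGroup.of x)))⁻¹
      unfold foxRho
      rw [foxT_one, one_mul, one_mul]
  | inv_of x ih => exact hinv _ ih
  | mul w w' ihw ihw' =>
      rw [hdmul, map_add, ihw, fox_E1 p hsurj d₁ hd₁ (p w) (d w'), ihw',
        fox_d1d p d d₁ hd1 hdof hdmul hd₁ w', foxC_ab]
      have e2 : foxDel p hsurj (p w) (MonoidAlgebra.of ℤ G (p w') - 1)
          = foxAb p ⟨foxDelta p hsurj (p w) (p w'), foxDelta_mem p hsurj (p w) (p w')⟩ := by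
        rw [of_apply', MonoidAlgebra.one_def, map_sub, foxDel_single, foxDel_single,
          foxAb_delta_one, sub_zero]
      rw [e2, ← add_assoc, ← foxAb_mul, ← foxAb_mul]
      congr 1
      apply Subtype.ext
      show (w * (foxT p hsurj (p w))⁻¹)
          * (foxT p hsurj (p w) * (w' * (foxT p hsurj (p w'))⁻¹) * (foxT p hsurj (p w))⁻¹)
          * foxDelta p hsurj (p w) (p w')
          = (w * w') * (foxT p hsurj (p (w * w')))⁻¹
      rw [map_mul]
      unfold foxDelta
      group

end main

end FoxAux

open FoxAux

/-- Lemma 1.7 of the paper, via the Fox derivative.  Let `p : F → G` be surjective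
with kernel `R`, let `∂ : F → (X →₀ ℤ[G])` be the Fox derivative (the unique
crossed homomorphism with `∂(of x) = single x 1`), and let
`∂₁ : (X →₀ ℤ[G]) → ℤ[G]` be the `ℤ[G]`-linear map with
`∂₁(single x 1) = p(of x) − 1`.  Then the restriction of `∂` to `R` is a group
homomorphism into the additive group `X →₀ ℤ[G]`, the induced map on the
abelianization `R/[R,R]` is injective, and its image is exactly `ker ∂₁`. -/
theorem fox_derivative_abelianization (X : Type*) (G : Type*) [Group G]
    (p : FreeGroup X →* G) (hsurj : Function.Surjective p)
    (d : FreeGroup X → (X →₀ MonoidAlgebra ℤ G))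
    (hd1 : d 1 = 0)
    (hdof : ∀ x : X, d (FreeGroup.of x) = Finsupp.single x 1)
    (hdmul : ∀ w w' : FreeGroup X,
      d (w * w') = d w + (MonoidAlgebra.of ℤ G (p w)) • d w')
    (d₁ : (X →₀ MonoidAlgebra ℤ G) →ₗ[MonoidAlgebra ℤ G] MonoidAlgebra ℤ G)
    (hd₁ : ∀ x : X,
      d₁ (Finsupp.single x 1) = MonoidAlgebra.of ℤ G (p (FreeGroup.of x)) - 1) :
    (∀ r ∈ p.ker, ∀ r' ∈ p.ker, d (r * r') = d r + d r') ∧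
    (∀ r ∈ p.ker, d r = 0 → r ∈ ⁅p.ker, p.ker⁆) ∧
    (d '' (p.ker : Set (FreeGroup X)) = (LinearMap.ker d₁ : Set (X →₀ MonoidAlgebra ℤ G))) := by
  have part1 : ∀ r ∈ p.ker, ∀ r' ∈ p.ker, d (r * r') = d r + d r' := by
    intro r hr r' _hr'
    rw [hdmul, MonoidHom.mem_ker.mp hr, map_one, one_smul]
  refine ⟨part1, ?_, ?_⟩
  · -- part (ii)
    intro r hr hdr
    have hq := fox_Q p hsurj d d₁ hd1 hdof hdmul hd₁ r
    rw [hdr, map_zero] at hq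
    have hel : (⟨r * (foxT p hsurj (p r))⁻¹, fox_memQ p hsurj r⟩ : ↥p.ker)
        = ⟨r, hr⟩ := by
      apply Subtype.ext
      show r * (foxT p hsurj (p r))⁻¹ = r
      rw [MonoidHom.mem_ker.mp hr, foxT_one]
      group
    rw [hel] at hq
    have h1 : Abelianization.of (⟨r, hr⟩ : ↥p.ker) = 1 := by
      have h := hq.symm
      rw [foxAb] at h
      exact h
    have h2 : (⟨r, hr⟩ : ↥p.ker) ∈ commutator ↥p.ker :=
      (QuotientGroup.eq_one_iff _).mp h1
    have h3 : r ∈ Subgroup.map p.ker.subtype (commutator ↥p.ker) := ⟨⟨r, hr⟩, h2, rfl⟩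
    rwa [commutator_def, Subgroup.map_commutator, ← MonoidHom.range_eq_map,
      Subgroup.range_subtype] at h3
  · -- part (iii)
    have hzero : (0 : X →₀ MonoidAlgebra ℤ G) ∈ d '' (p.ker : Set (FreeGroup X)) :=
      ⟨1, p.ker.one_mem, hd1⟩
    have hneg : ∀ a ∈ d '' (p.ker : Set (FreeGroup X)),
        -a ∈ d '' (p.ker : Set (FreeGroup X)) := by
      rintro a ⟨r, hr, rfl⟩
      refine ⟨r⁻¹, inv_mem hr, ?_⟩
      rw [fox_inv' p d hd1 hdmul r, map_inv, MonoidHom.mem_ker.mp hr, inv_one, map_one,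
        neg_smul, one_smul]
    have hadd : ∀ a ∈ d '' (p.ker : Set (FreeGroup X)),
        ∀ b ∈ d '' (p.ker : Set (FreeGroup X)),
        a + b ∈ d '' (p.ker : Set (FreeGroup X)) := by
      rintro a ⟨r, hr, rfl⟩ b ⟨r', hr', rfl⟩
      exact ⟨r * r', mul_mem hr hr', part1 r hr r' hr'⟩
    let N : AddSubgroup (X →₀ MonoidAlgebra ℤ G) :=
      { carrier := d '' (p.ker : Set (FreeGroup X))
        zero_mem' := hzero
        add_mem' := fun ha hb => hadd _ ha _ hb
        neg_mem' := fun ha => hneg _ ha }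
    let π : (X →₀ MonoidAlgebra ℤ G) →+ (X →₀ MonoidAlgebra ℤ G) ⧸ N :=
      QuotientAddGroup.mk' N
    have hmemN : ∀ a, a ∈ N ↔ a ∈ d '' (p.ker : Set (FreeGroup X)) := fun _ => Iff.rfl
    have hwd : ∀ w w' : FreeGroup X, p w = p w' → π (d w) = π (d w') := by
      intro w w' hww
      have hr : p (w⁻¹ * w') = 1 := by rw [map_mul, map_inv, hww, inv_mul_cancel]
      have hstep : d w' = d w + MonoidAlgebra.of ℤ G (p w) • d (w⁻¹ * w') := by
        rw [← hdmul]
        congr 1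
        group
      have hmem : MonoidAlgebra.of ℤ G (p w) • d (w⁻¹ * w') ∈ N := by
        rw [hmemN, ← fox_conj p d hd1 hdmul w _ hr]
        exact ⟨w * (w⁻¹ * w') * w⁻¹, (MonoidHom.normal_ker p).conj_mem _
          (MonoidHom.mem_ker.mpr hr) w, rfl⟩
      rw [hstep, map_add]
      have hz : π (MonoidAlgebra.of ℤ G (p w) • d (w⁻¹ * w')) = 0 :=
        (QuotientAddGroup.eq_zero_iff _).mpr hmem
      rw [hz]
      exact (add_zero (π (d w))).symm
    let σ : MonoidAlgebra ℤ G →+ (X →₀ MonoidAlgebra ℤ G) ⧸ N :=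
      (Finsupp.liftAddHom (α := G) (M := ℤ) (N := (X →₀ MonoidAlgebra ℤ G) ⧸ N) fun g =>
        zmultiplesHom ((X →₀ MonoidAlgebra ℤ G) ⧸ N) (π (d (foxT p hsurj g)))).comp
        (MonoidAlgebra.coeffAddEquiv (R := ℤ) (M := G)).toAddMonoidHom
    have hσsingle : ∀ g : G, σ (MonoidAlgebra.single g (1 : ℤ)) = π (d (foxT p hsurj g)) := by
      intro g
      show (Finsupp.liftAddHom (α := G) (M := ℤ) (N := (X →₀ MonoidAlgebra ℤ G) ⧸ N) fun g =>
          zmultiplesHom _ (π (d (foxT p hsurj g))))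
        (Finsupp.single g (1 : ℤ)) = _
      rw [Finsupp.liftAddHom_apply_single]
      exact one_zsmul _
    have hσ : ∀ m, σ (d₁ m) = π m := by
      have key : σ.comp d₁.toAddMonoidHom = π := by
        ext x h
        show σ (d₁ (Finsupp.single x (MonoidAlgebra.single h (1 : ℤ))))
            = π (Finsupp.single x (MonoidAlgebra.single h (1 : ℤ)))
        have step2 : d₁ (Finsupp.single x (MonoidAlgebra.single h (1 : ℤ)))
            = MonoidAlgebra.single (h * p (FreeGroup.of x)) (1 : ℤ)
              - MonoidAlgebra.single h 1 := by
          have e : (Finsupp.single x (MonoidAlgebra.single h (1 : ℤ)) :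
                X →₀ MonoidAlgebra ℤ G)
              = (MonoidAlgebra.single h (1 : ℤ)) • Finsupp.single x (1 : MonoidAlgebra ℤ G) := by
            rw [Finsupp.smul_single, smul_eq_mul, mul_one]
          rw [e, map_smul, hd₁, smul_eq_mul, mul_sub, mul_one, of_apply',
            MonoidAlgebra.single_mul_single, mul_one]
        have hsx : (Finsupp.single x (MonoidAlgebra.single h (1 : ℤ)) :
              X →₀ MonoidAlgebra ℤ G)
            = d (foxT p hsurj h * FreeGroup.of x) - d (foxT p hsurj h) := by
          rw [hdmul, hdof, foxT_spec, of_apply', Finsupp.smul_single, smul_eq_mul, mul_one]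
          abel
        rw [step2, map_sub, hσsingle, hσsingle, hsx, map_sub]
        have := hwd (foxT p hsurj (h * p (FreeGroup.of x))) (foxT p hsurj h * FreeGroup.of x)
          (by rw [foxT_spec, map_mul, foxT_spec])
        rw [this]
      exact fun m => DFunLike.congr_fun key m
    apply Set.Subset.antisymm
    · rintro m ⟨r, hr, rfl⟩
      have : d₁ (d r) = 0 := by
        rw [fox_d1d p d d₁ hd1 hdof hdmul hd₁ r, MonoidHom.mem_ker.mp hr, map_one, sub_self]
      exact this
    · intro m hm
      have hm0 : d₁ m = 0 := hm
      have : π m = 0 := by rw [← hσ m, hm0, map_zero]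
      exact (QuotientAddGroup.eq_zero_iff m).mp this
end

section
/- Let π be a group and n a natural number. Let r, s be n × n matrices over Λ = MonoidAlgebra (ZMod 2) π with s * r = 1. Then for any indices i ≠ j in Fin n and any u ∈ π, the element Σ_p r p i * ⟨u•(s j p), u•(s j p)⟩ of Λ lies in T; equivalently, its image in the conjugation-coinvariants Λ/T is zero. -/
/-- The coefficientwise "intersection pairing" `⟨x,y⟩ g = (x g)·(y g)` on the group
algebra `Λ = MonoidAlgebra (ZMod 2) π`. -/
noncomputable def interPairing {π : Type*} (x y : MonoidAlgebra (ZMod 2) π) :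
    MonoidAlgebra (ZMod 2) π :=
  MonoidAlgebra.ofCoeff (Finsupp.zipWith (· * ·) (by simp) x.coeff y.coeff)

/-- The `ZMod 2`-submodule `T ⊆ Λ` spanned by the elements
`single (g*h) 1 − single (h*g) 1`, so that `Λ/T` is the module of coinvariants of
the conjugation action of `π` on `Λ`. -/
noncomputable def conjSub (π : Type*) [Group π] :
    Submodule (ZMod 2) (MonoidAlgebra (ZMod 2) π) :=
  Submodule.span (ZMod 2)
    {z | ∃ g h : π, z = MonoidAlgebra.single (g * h) 1 - MonoidAlgebra.single (h * g) 1}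

/-! Over `ZMod 2` every coefficient is idempotent, so `⟨x, x⟩ = x` and the sum is
`Σ_p r p i * x p` with `x p = u • s j p`. The reversed products sum to `u • (s * r) j i = 0`,
so the sum is a sum of commutators `a * b - b * a`, and these lie in `T`: the commutator is
bilinear, and on basis elements `single g 1`, `single h 1` it is a generator of `T`. -/

theorem interPairing_self {π : Type*} (x : MonoidAlgebra (ZMod 2) π) :
    interPairing x x = x := by
  have hidem : ∀ a : ZMod 2, a * a = a := by decide
  ext g
  simp [interPairing, hidem]

theorem mul_sub_mul_mem_conjSub {π : Type*} [Group π] (a b : MonoidAlgebra (ZMod 2) π) :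
    a * b - b * a ∈ conjSub π := by
  let commQ := (LinearMap.mul (ZMod 2) (MonoidAlgebra (ZMod 2) π) -
      (LinearMap.mul (ZMod 2) (MonoidAlgebra (ZMod 2) π)).flip).compr₂ (conjSub π).mkQ
  have hzero : commQ = 0 := by
    refine MonoidAlgebra.lhom_ext' fun g => LinearMap.ext_ring <|
      MonoidAlgebra.lhom_ext' fun h => LinearMap.ext_ring ?_
    have hgen : MonoidAlgebra.single (g * h) (1 : ZMod 2) - MonoidAlgebra.single (h * g) 1 ∈
        conjSub π := Submodule.subset_span ⟨g, h, rfl⟩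
    simpa [commQ, MonoidAlgebra.single_mul_single, ← Submodule.Quotient.mk_sub] using hgen
  simpa [commQ] using (Submodule.Quotient.mk_eq_zero (conjSub π)).mp
    (LinearMap.congr_fun₂ hzero a b)

/-- If `s * r = 1` then for `i ≠ j` and `u ∈ π`, the element
`Σ_p r p i * ⟨u•(s j p), u•(s j p)⟩` lies in `T`, i.e. vanishes in the
conjugation-coinvariants `Λ/T`. -/
theorem diag_pairing_mem_conjSub (π : Type*) [Group π] (n : ℕ)
    (r s : Matrix (Fin n) (Fin n) (MonoidAlgebra (ZMod 2) π))
    (hsr : s * r = 1) (i j : Fin n) (hij : i ≠ j) (u : π) :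
    (∑ p : Fin n, r p i *
      interPairing (MonoidAlgebra.single u 1 * s j p) (MonoidAlgebra.single u 1 * s j p))
      ∈ conjSub π := by
  set x : Fin n → MonoidAlgebra (ZMod 2) π := fun p => MonoidAlgebra.single u 1 * s j p
  have hxr : ∑ p, x p * r p i = 0 := by
    simp only [x, mul_assoc, ← Finset.mul_sum, ← Matrix.mul_apply, hsr,
      Matrix.one_apply_ne hij.symm, mul_zero]
  have hcomm : ∑ p, (r p i * x p - x p * r p i) ∈ conjSub π :=
    Submodule.sum_mem _ fun p _ => mul_sub_mul_mem_conjSub _ _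
  simpa only [interPairing_self, Finset.sum_sub_distrib, hxr, sub_zero] using hcomm
end

section
/- Let π be a group, n a natural number, i, j, k ∈ Fin n arbitrary indices, h ≠ ℓ in Fin n, and u, v, w ∈ π. Let r, s be mutually inverse n × n matrices over Λ = MonoidAlgebra (ZMod 2) π (r * s = 1 and s * r = 1). Set E = 1 + (single w 1)·(stdBasisMatrix h ℓ), r' = E * r and s' = s * E (so that r' and s' are mutually inverse, since E⁻¹ = E in characteristic 2). Then, modulo the submodule T, Σ_p r p i * ⟨u•(s j p), v•(s k p)⟩ + Σ_p r' p i * ⟨u•(s' j p), v•(s' k p)⟩ ≡ r ℓ i * ⟨u•(s j ℓ), v•((s k h)•w)⟩ + r ℓ i * ⟨u•((s j h)•w), v•(s k ℓ)⟩. -/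
lemma interPairing_apply {π : Type*} (x y : MonoidAlgebra (ZMod 2) π) (g : π) :
    (interPairing x y).coeff g = x.coeff g * y.coeff g := rfl

lemma interPairing_add_left {π : Type*} (x x' y : MonoidAlgebra (ZMod 2) π) :
    interPairing (x + x') y = interPairing x y + interPairing x' y := by
  ext g
  rw [interPairing_apply, MonoidAlgebra.coeff_add, Finsupp.add_apply, MonoidAlgebra.coeff_add, Finsupp.add_apply, interPairing_apply, interPairing_apply]
  ring

lemma interPairing_add_right {π : Type*} (x y y' : MonoidAlgebra (ZMod 2) π) :
    interPairing x (y + y') = interPairing x y + interPairing x y' := by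
  ext g
  rw [interPairing_apply, MonoidAlgebra.coeff_add, Finsupp.add_apply, MonoidAlgebra.coeff_add, Finsupp.add_apply, interPairing_apply, interPairing_apply]
  ring

lemma interPairing_mul_single {π : Type*} [Group π] (x y : MonoidAlgebra (ZMod 2) π) (w : π) :
    interPairing (x * MonoidAlgebra.single w 1) (y * MonoidAlgebra.single w 1)
      = interPairing x y * MonoidAlgebra.single w 1 := by
  ext g; simp [interPairing_apply, MonoidAlgebra.coeff_mul_single_apply]


lemma comm_mem {π : Type*} [Group π] (x y : MonoidAlgebra (ZMod 2) π) :
    x * y - y * x ∈ conjSub π := by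
  induction x using MonoidAlgebra.induction_linear with
  | zero => simp
  | add a b ha hb =>
      have := Submodule.add_mem _ ha hb
      rw [add_mul, mul_add]
      convert this using 1; abel
  | single g c =>
    induction y using MonoidAlgebra.induction_linear with
    | zero => simp
    | add a b ha hb =>
        have := Submodule.add_mem _ ha hb
        rw [add_mul, mul_add]
        convert this using 1; abel
    | single g' c' =>
        have : (MonoidAlgebra.single g c : MonoidAlgebra (ZMod 2) π) * MonoidAlgebra.single g' c'
            - MonoidAlgebra.single g' c' * MonoidAlgebra.single g c
            = (c * c') • (MonoidAlgebra.single (g * g') 1 - MonoidAlgebra.single (g' * g) 1) := by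
          simp [MonoidAlgebra.single_mul_single, smul_sub, MonoidAlgebra.smul_single', mul_comm c' c]
        rw [this]
        exact Submodule.smul_mem _ _ (Submodule.subset_span ⟨g, g', rfl⟩)

/-- Formula 3.4 of the paper: the effect of an elementary row/column operation
`E = 1 + w·E_{hℓ}` on the Grassmann cochain, modulo the submodule `T`. -/
theorem grassmann_cochain_coboundary (π : Type*) [Group π] (n : ℕ)
    (i j k : Fin n) (h l : Fin n) (hhl : h ≠ l) (u v w : π)
    (r s : Matrix (Fin n) (Fin n) (MonoidAlgebra (ZMod 2) π))
    (hrs : r * s = 1) (hsr : s * r = 1)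
    (E r' s' : Matrix (Fin n) (Fin n) (MonoidAlgebra (ZMod 2) π))
    (hE : E = 1 + Matrix.single h l (MonoidAlgebra.single w 1))
    (hr' : r' = E * r) (hs' : s' = s * E) :
    ((∑ p : Fin n, r p i *
        interPairing (MonoidAlgebra.single u 1 * s j p) (MonoidAlgebra.single v 1 * s k p)) +
      (∑ p : Fin n, r' p i *
        interPairing (MonoidAlgebra.single u 1 * s' j p) (MonoidAlgebra.single v 1 * s' k p)))
      -
      (r l i * interPairing (MonoidAlgebra.single u 1 * s j l)
          (MonoidAlgebra.single v 1 * (s k h * MonoidAlgebra.single w 1)) +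
       r l i * interPairing (MonoidAlgebra.single u 1 * (s j h * MonoidAlgebra.single w 1))
          (MonoidAlgebra.single v 1 * s k l))
      ∈ conjSub π := by
  have add_self : ∀ x : MonoidAlgebra (ZMod 2) π, x + x = 0 := by
    intro x
    have h2 : (2 : ZMod 2) = 0 := rfl
    rw [← two_smul (ZMod 2) x, h2, zero_smul]
  have neg_self : ∀ x : MonoidAlgebra (ZMod 2) π, -x = x := fun x => by
    rw [neg_eq_iff_add_eq_zero, add_self]
  have flip2 : ∀ a b : MonoidAlgebra (ZMod 2) π, a + b = b - a := fun a b => by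
    rw [sub_eq_add_neg, neg_self, add_comm]
  set ww : MonoidAlgebra (ZMod 2) π := MonoidAlgebra.single w 1 with hww
  set U : MonoidAlgebra (ZMod 2) π := MonoidAlgebra.single u 1 with hU
  set V : MonoidAlgebra (ZMod 2) π := MonoidAlgebra.single v 1 with hV
  have hsE : ∀ (a p : Fin n), s' a p = s a p + (if p = l then s a h * ww else 0) := by
    intro a p
    rw [hs', hE, Matrix.mul_add, Matrix.mul_one, Matrix.add_apply, Matrix.mul_apply]
    congr 1
    by_cases hp : p = l
    · subst hp
      rw [if_pos rfl, Finset.sum_eq_single h]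
      · rw [Matrix.single_apply_same]
      · intro q _ hq
        rw [Matrix.single_apply_of_ne, mul_zero]
        exact fun hc => hq hc.1.symm
      · intro hc; exact absurd (Finset.mem_univ h) hc
    · rw [if_neg hp]
      apply Finset.sum_eq_zero
      intro q _
      rw [Matrix.single_apply_of_ne, mul_zero]
      exact fun hc => hp hc.2.symm
  have hrE : ∀ p : Fin n, r' p i = r p i + (if p = h then ww * r l i else 0) := by
    intro p
    rw [hr', hE, Matrix.add_mul, Matrix.one_mul, Matrix.add_apply, Matrix.mul_apply]
    congr 1
    by_cases hp : p = h
    · subst hp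
      rw [if_pos rfl, Finset.sum_eq_single l]
      · rw [Matrix.single_apply_same]
      · intro q _ hq
        rw [Matrix.single_apply_of_ne, zero_mul]
        exact fun hc => hq hc.2.symm
      · intro hc; exact absurd (Finset.mem_univ l) hc
    · rw [if_neg hp]
      apply Finset.sum_eq_zero
      intro q _
      rw [Matrix.single_apply_of_ne, zero_mul]
      exact fun hc => hp hc.1.symm
  rw [flip2]
  rw [← Finset.sum_sub_distrib]
  set A : MonoidAlgebra (ZMod 2) π :=
    ww * r l i * interPairing (U * s j h) (V * s k h) with hA
  set B : MonoidAlgebra (ZMod 2) π :=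
    r l i * interPairing (U * s j l) (V * (s k h * ww)) +
      r l i * interPairing (U * (s j h * ww)) (V * s k l) +
      r l i * interPairing (U * (s j h * ww)) (V * (s k h * ww)) with hB
  have key : ∀ p ∈ Finset.univ,
      (r' p i * interPairing (U * s' j p) (V * s' k p)
        - r p i * interPairing (U * s j p) (V * s k p))
      = (if p = h then A else 0) + (if p = l then B else 0) := by
    intro p _
    rw [hrE p, hsE j p, hsE k p]
    by_cases hp : p = h
    · subst hp
      rw [if_pos rfl, if_pos rfl, if_neg hhl, if_neg hhl, if_neg hhl, add_zero, add_zero, add_zero, hA]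
      noncomm_ring
    · rw [if_neg hp, if_neg hp, add_zero, zero_add]
      by_cases hp2 : p = l
      · subst hp2
        rw [if_pos rfl, if_pos rfl, if_pos rfl]
        simp only [mul_add, interPairing_add_left, interPairing_add_right, hB]
        noncomm_ring
      · rw [if_neg hp2, if_neg hp2, if_neg hp2, add_zero, add_zero, sub_self]
  rw [Finset.sum_congr rfl key, Finset.sum_add_distrib]
  simp only [Finset.sum_ite_eq', Finset.mem_univ, if_pos]
  have hP3 : interPairing (U * (s j h * ww)) (V * (s k h * ww))
      = interPairing (U * s j h) (V * s k h) * ww := by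
    rw [← mul_assoc, ← mul_assoc, interPairing_mul_single]
  have hmem := comm_mem ww (r l i * interPairing (U * s j h) (V * s k h))
  rw [sub_eq_add_neg, neg_self] at hmem
  have heq : A + B -
      (r l i * interPairing (U * s j l) (V * (s k h * ww)) +
       r l i * interPairing (U * (s j h * ww)) (V * s k l))
      = ww * (r l i * interPairing (U * s j h) (V * s k h)) +
        r l i * interPairing (U * s j h) (V * s k h) * ww := by
    rw [hA, hB, hP3]
    noncomm_ring
  rw [heq]
  exact hmem
end

section
/- Let A be a type with decidable equality and let x, y be Finsets in A. Define η(x) ∈ ZMod 2 as the parity of ⌊|x|/2⌋ (equivalently η(x) = 0 if |x| ≡ 0 or 1 mod 4, and η(x) = 1 if |x| ≡ 2 or 3 mod 4). Then η(x Δ y) = η(x) + η(y) + |x|·|y| + |x ∩ y| in ZMod 2, where x Δ y denotes the symmetric difference of x and y. -/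
/-- `η(x) ∈ ZMod 2` is the parity of `⌊|x|/2⌋`. -/
def eta {A : Type*} (x : Finset A) : ZMod 2 := ((x.card / 2 : ℕ) : ZMod 2)

lemma eta_key (a b c : ℕ) (ha : c ≤ a) (hb : c ≤ b) :
    (a + b - 2 * c) / 2 % 2 = (a / 2 + b / 2 + a * b + c) % 2 := by
  have hab : a * b % 2 = a % 2 * (b % 2) % 2 := Nat.mul_mod a b 2
  set p := a * b with hp
  clear_value p
  rcases Nat.mod_two_eq_zero_or_one a with h1 | h1 <;>
    rcases Nat.mod_two_eq_zero_or_one b with h2 | h2 <;>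
      rw [h1, h2] at hab <;> omega

lemma card_symmDiff' {A : Type*} [DecidableEq A] (x y : Finset A) :
    (symmDiff x y).card = x.card + y.card - 2 * (x ∩ y).card := by
  rw [symmDiff_eq_sup_sdiff_inf]
  have hsub : x ⊓ y ⊆ x ⊔ y := le_trans inf_le_left le_sup_left
  rw [Finset.card_sdiff_of_subset hsub]
  have := Finset.card_union_add_card_inter x y
  change (x ∪ y).card - (x ∩ y).card = _
  omega

/-- Formula (1) of Section 4:
`η(x Δ y) = η(x) + η(y) + |x|·|y| + |x ∩ y|` in `ZMod 2`. -/
theorem eta_symmDiff {A : Type*} [DecidableEq A] (x y : Finset A) :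
    eta (symmDiff x y) =
      eta x + eta y + (x.card * y.card : ℕ) + ((x ∩ y).card : ℕ) := by
  unfold eta
  rw [card_symmDiff']
  have h : (((x.card + y.card - 2 * (x ∩ y).card) / 2 : ℕ) : ZMod 2)
      = ((x.card / 2 + y.card / 2 + x.card * y.card + (x ∩ y).card : ℕ) : ZMod 2) := by
    rw [ZMod.natCast_eq_natCast_iff']
    exact eta_key _ _ _ (Finset.card_le_card Finset.inter_subset_left)
      (Finset.card_le_card Finset.inter_subset_right)
  rw [h]
  push_cast
  ring
end

section
/- Let A be a linearly ordered type and let x, y be disjoint Finsets in A. Define inv(x,y) = |{(a,b) ∈ x × y : b < a}| and n₁(x,y) ∈ ZMod 2 as the parity of (|x| choose 2) + inv(x,y). Then n₁(y,x) = n₁(x,y) + η(x ∪ y), where η(z) ∈ ZMod 2 is the parity of ⌊|z|/2⌋. -/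
/-- `inv(x,y) = |{(a,b) ∈ x × y : b < a}|`. -/
def invCount {A : Type*} [LinearOrder A] (x y : Finset A) : ℕ :=
  ((x ×ˢ y).filter (fun p => p.2 < p.1)).card

/-- `n₁(x,y) ∈ ZMod 2` is the parity of `(|x| choose 2) + inv(x,y)`. -/
def n1 {A : Type*} [LinearOrder A] (x y : Finset A) : ZMod 2 :=
  ((x.card.choose 2 + invCount x y : ℕ) : ZMod 2)

lemma choose_two_add (m n : ℕ) : (m + n).choose 2 = m.choose 2 + n.choose 2 + m * n := by
  induction n with
  | zero => simp
  | succ k ih =>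
    have h1 : (m + k + 1).choose 2 = (m + k).choose 2 + (m + k) := by
      rw [Nat.choose_succ_succ]
      simp [Nat.choose_one_right, Nat.add_comm]
    have h2 : (k + 1).choose 2 = k.choose 2 + k := by
      rw [Nat.choose_succ_succ]
      simp [Nat.choose_one_right, Nat.add_comm]
    have : m + (k+1) = (m + k) + 1 := by ring
    rw [this, h1, h2, ih]
    ring

lemma choose_two_mod (k : ℕ) : k.choose 2 % 2 = (k / 2) % 2 := by
  have h2 : 2 * k.choose 2 = k * (k - 1) := by
    rw [Nat.choose_two_right, Nat.mul_div_cancel' (Nat.even_mul_pred_self k).two_dvd]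
  rcases Nat.even_or_odd k with ⟨q, hq⟩ | ⟨q, hq⟩
  · rcases q with _ | p
    · subst hq; simp
    · have hk1 : k - 1 = 2 * p + 1 := by omega
      have key : 2 * k.choose 2 = 2 * ((p + 1) * (2 * p + 1)) := by
        rw [h2, hk1, hq]; ring
      have hc : k.choose 2 = 2 * (p * p + p) + (p + 1) := by nlinarith
      omega
  · have hk1 : k - 1 = 2 * q := by omega
    have key : 2 * k.choose 2 = 2 * (2 * (q * q) + q) := by
      rw [h2, hk1, hq]; ring
    have hc : k.choose 2 = 2 * (q * q) + q := by omega
    subst hq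
    set t := q * q
    omega

lemma invCount_add {A : Type*} [LinearOrder A] (x y : Finset A) (h : Disjoint x y) :
    invCount x y + invCount y x = x.card * y.card := by
  have h1 : invCount y x = ((x ×ˢ y).filter (fun p => p.1 < p.2)).card := by
    apply Finset.card_nbij' (i := Prod.swap) (j := Prod.swap) <;>
      simp [Set.MapsTo, Set.LeftInvOn, Set.RightInvOn, Set.EqOn, and_comm]
  have h2 : ((x ×ˢ y).filter (fun p => ¬ p.2 < p.1)) =
      ((x ×ˢ y).filter (fun p => p.1 < p.2)) := by
    apply Finset.filter_congr
    intro p hp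
    simp only [Finset.mem_product] at hp
    have hne : p.1 ≠ p.2 := fun he => Finset.disjoint_left.mp h hp.1 (he ▸ hp.2)
    simp only [not_lt, eq_iff_iff]
    constructor
    · exact fun hle => lt_of_le_of_ne hle hne
    · exact le_of_lt
  rw [invCount, h1, ← h2, Finset.card_filter_add_card_filter_not,
    Finset.card_product]

/-- Formula (3) of Section 4: for disjoint `x`, `y`,
`n₁(y,x) = n₁(x,y) + η(x ∪ y)`. -/
theorem n1_swap {A : Type*} [LinearOrder A] (x y : Finset A) (h : Disjoint x y) :
    n1 y x = n1 x y + eta (x ∪ y) := by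
  have hcard : (x ∪ y).card = x.card + y.card := Finset.card_union_of_disjoint h
  have hsum : n1 x y + n1 y x = eta (x ∪ y) := by
    rw [n1, n1, eta, hcard, ← Nat.cast_add]
    rw [ZMod.natCast_eq_natCast_iff]
    have hinv := invCount_add x y h
    have hch := choose_two_add x.card y.card
    have hm := choose_two_mod (x.card + y.card)
    unfold Nat.ModEq
    omega
  have : n1 x y + n1 x y = 0 := by
    rw [CharTwo.add_self_eq_zero]
  linear_combination hsum - this
end

section
/- Let A be a linearly ordered type and B a type, both with decidable equality. For a Finset x of A × B and b ∈ B, let x_b denote the Finset {a ∈ A : (a,b) ∈ x}. For Finsets x, y of A × B define finitely supported functions B →₀ ZMod 2 by: n₃(x,y) b = n₁((x\y)_b, (y\x)_b) + n₁((x∩y)_b, (x\y)_b) + n₁((x∩y)_b, (y\x)_b), η(x) b = η(x_b), and d̃(x,y) = n₃(x,y) + η(x). Then d̃ is biadditive with respect to symmetric difference: for all Finsets x, x', y, y' of A × B, d̃(x Δ x', y) = d̃(x,y) + d̃(x',y) and d̃(x, y Δ y') = d̃(x,y) + d̃(x,y'). -/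
/-- `x_b = {a ∈ A : (a,b) ∈ x}`. -/
def sliceAt {A B : Type*} [DecidableEq A] [DecidableEq B]
    (x : Finset (A × B)) (b : B) : Finset A :=
  ((x.filter (fun p => p.2 = b)).image Prod.fst)

/-- `n₃(x,y) b = n₁((x\y)_b, (y\x)_b) + n₁((x∩y)_b, (x\y)_b) + n₁((x∩y)_b, (y\x)_b)`. -/
def n3Fun {A B : Type*} [LinearOrder A] [DecidableEq B]
    (x y : Finset (A × B)) (b : B) : ZMod 2 :=
  n1 (sliceAt (x \ y) b) (sliceAt (y \ x) b) + n1 (sliceAt (x ∩ y) b) (sliceAt (x \ y) b) +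
    n1 (sliceAt (x ∩ y) b) (sliceAt (y \ x) b)

/-- `d̃(x,y) b = n₃(x,y) b + η(x_b)`, as a finitely supported function `B →₀ ZMod 2`. -/
noncomputable def dTilde {A B : Type*} [LinearOrder A] [DecidableEq B]
    (x y : Finset (A × B)) : B →₀ ZMod 2 :=
  Finsupp.onFinset ((x ∪ y).image Prod.snd) (fun b => n3Fun x y b + eta (sliceAt x b))
    (by
      intro b hb
      by_contra hmem
      apply hb
      have hslice : ∀ z : Finset (A × B), z ⊆ x ∪ y → sliceAt z b = ∅ := by
        intro z hz
        simp only [sliceAt, Finset.image_eq_empty, Finset.filter_eq_empty_iff]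
        intro p hp
        exact fun hpb => hmem (Finset.mem_image.2 ⟨p, hz hp, hpb⟩)
      simp only [n3Fun,
        hslice (x \ y) (Finset.sdiff_subset.trans Finset.subset_union_left),
        hslice (y \ x) (Finset.sdiff_subset.trans Finset.subset_union_right),
        hslice (x ∩ y) (Finset.inter_subset_left.trans Finset.subset_union_left),
        hslice x Finset.subset_union_left]
      simp [n1, invCount, eta, Nat.choose])


set_option linter.unusedSectionVars false
set_option linter.unreachableTactic false
set_option linter.unusedTactic false
set_option maxHeartbeats 1000000

section Helpers

variable {A : Type*} [LinearOrder A]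

lemma chooseTwo_add (a b : ℕ) : (a + b).choose 2 = a.choose 2 + b.choose 2 + a * b := by
  induction b with
  | zero => simp
  | succ n ih =>
    have h1 : a + (n+1) = (a+n) + 1 := by ring
    rw [h1, Nat.choose_succ_succ, ih, Nat.choose_succ_succ n 1]
    simp [Nat.choose_one_right]
    ring

lemma chooseTwo_add4 (a b c d : ℕ) : (a + b + c + d).choose 2 =
    a.choose 2 + b.choose 2 + c.choose 2 + d.choose 2 +
      (a * b + a * c + a * d + b * c + b * d + c * d) := by
  rw [chooseTwo_add (a+b+c) d, chooseTwo_add (a+b) c, chooseTwo_add a b]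
  ring

lemma halfParity (n : ℕ) : 2 ∣ (n / 2 + n.choose 2) := by
  induction n using Nat.twoStepInduction with
  | zero => decide
  | one => decide
  | more n ih _ =>
    have hc : (n+2).choose 2 = n.choose 2 + (2*n + 1) := by
      rw [Nat.choose_succ_succ, Nat.choose_succ_succ n 1]
      simp [Nat.choose_one_right]; ring
    have h2 : (n+2)/2 = n/2 + 1 := by omega
    rw [hc]
    omega

lemma cast_parity (a b : ℕ) (h : (a + b) % 2 = 0) : ((a : ZMod 2) = (b : ZMod 2)) := by
  have : ((a : ℤ) : ZMod 2) = ((b : ℤ) : ZMod 2) := by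
    rw [ZMod.intCast_eq_intCast_iff']
    have : (a : ℤ) % 2 = (b : ℤ) % 2 := by omega
    simpa using this
  simpa using this

lemma eta_eq_choose {C : Type*} (x : Finset C) : eta x = ((x.card.choose 2 : ℕ) : ZMod 2) := by
  unfold eta
  apply cast_parity
  have := halfParity x.card
  omega

lemma invCount_union_left (p q y : Finset A) (h : Disjoint p q) :
    invCount (p ∪ q) y = invCount p y + invCount q y := by
  unfold invCount
  rw [Finset.union_product, Finset.filter_union, Finset.card_union_of_disjoint]
  exact Finset.disjoint_filter_filter (Finset.disjoint_product.mpr (Or.inl h))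

lemma invCount_union_right (x r s : Finset A) (h : Disjoint r s) :
    invCount x (r ∪ s) = invCount x r + invCount x s := by
  unfold invCount
  rw [Finset.product_union, Finset.filter_union, Finset.card_union_of_disjoint]
  exact Finset.disjoint_filter_filter (Finset.disjoint_product.mpr (Or.inr h))

lemma invCount_add_invCount (p q : Finset A) (h : Disjoint p q) :
    invCount p q + invCount q p = p.card * q.card := by
  have hswap : invCount q p = ((p ×ˢ q).filter (fun z => z.1 < z.2)).card := by
    unfold invCount
    apply Finset.card_bij' (fun z _ => Prod.swap z) (fun z _ => Prod.swap z)
    · intro z hz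
      simp only [Finset.mem_filter, Finset.mem_product] at hz ⊢
      exact ⟨⟨hz.1.2, hz.1.1⟩, hz.2⟩
    · intro z hz
      simp only [Finset.mem_filter, Finset.mem_product] at hz ⊢
      exact ⟨⟨hz.1.2, hz.1.1⟩, hz.2⟩
    · intro z _; rfl
    · intro z _; rfl
  rw [hswap]
  have key := Finset.card_filter_add_card_filter_not
    (s := p ×ˢ q) (p := fun z : A × A => z.2 < z.1)
  have hco : Finset.filter (fun z : A × A => ¬ z.2 < z.1) (p ×ˢ q)
      = Finset.filter (fun z : A × A => z.1 < z.2) (p ×ˢ q) := by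
    apply Finset.filter_congr
    intro z hz
    simp only [Finset.mem_product] at hz
    have : z.1 ≠ z.2 := fun hzz => Finset.disjoint_left.mp h hz.1 (hzz ▸ hz.2)
    simp only [not_lt, eq_iff_iff]
    constructor
    · intro h1; exact lt_of_le_of_ne h1 this
    · intro h1; exact le_of_lt h1
  rw [hco] at key
  unfold invCount
  rw [key, Finset.card_product]

lemma n1_uu (p q r s : Finset A) (hpq : Disjoint p q) (hrs : Disjoint r s) :
    n1 (p ∪ q) (r ∪ s) =
      ((p.card.choose 2 + q.card.choose 2 + (invCount p q + invCount q p) +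
        (invCount p r + invCount p s + invCount q r + invCount q s) : ℕ) : ZMod 2) := by
  classical
  unfold n1
  rw [Finset.card_union_of_disjoint hpq, chooseTwo_add,
    invCount_union_left p q (r ∪ s) hpq,
    invCount_union_right p r s hrs, invCount_union_right q r s hrs,
    ← invCount_add_invCount p q hpq]
  push_cast
  ring

lemma eta_union4 (p q r s : Finset A) (hpq : Disjoint p q) (hpr : Disjoint p r)
    (hps : Disjoint p s) (hqr : Disjoint q r) (hqs : Disjoint q s) (hrs : Disjoint r s) :
    eta (p ∪ q ∪ r ∪ s) =
      ((p.card.choose 2 + q.card.choose 2 + r.card.choose 2 + s.card.choose 2 +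
        ((invCount p q + invCount q p) + (invCount p r + invCount r p) +
         (invCount p s + invCount s p) + (invCount q r + invCount r q) +
         (invCount q s + invCount s q) + (invCount r s + invCount s r)) : ℕ) : ZMod 2) := by
  classical
  rw [eta_eq_choose]
  have h1 : Disjoint (p ∪ q) r := by
    rw [Finset.disjoint_union_left]; exact ⟨hpr, hqr⟩
  have h2 : Disjoint (p ∪ q ∪ r) s := by
    rw [Finset.disjoint_union_left, Finset.disjoint_union_left]
    exact ⟨⟨hps, hqs⟩, hrs⟩
  rw [Finset.card_union_of_disjoint h2, Finset.card_union_of_disjoint h1,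
    Finset.card_union_of_disjoint hpq, chooseTwo_add4,
    ← invCount_add_invCount p q hpq, ← invCount_add_invCount p r hpr,
    ← invCount_add_invCount p s hps, ← invCount_add_invCount q r hqr,
    ← invCount_add_invCount q s hqs, ← invCount_add_invCount r s hrs]
  all_goals push_cast; ring

end Helpers

lemma slice_left {A : Type*} [LinearOrder A] (X X' Y : Finset A) :
    n1 (symmDiff X X' \ Y) (Y \ symmDiff X X') + n1 (symmDiff X X' ∩ Y) (symmDiff X X' \ Y) +
        n1 (symmDiff X X' ∩ Y) (Y \ symmDiff X X') + eta (symmDiff X X') =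
      n1 (X \ Y) (Y \ X) + n1 (X ∩ Y) (X \ Y) + n1 (X ∩ Y) (Y \ X) + eta X +
        (n1 (X' \ Y) (Y \ X') + n1 (X' ∩ Y) (X' \ Y) + n1 (X' ∩ Y) (Y \ X') + eta X') := by
  classical
  set aA := Finset.filter (fun z => z ∉ X' ∧ z ∉ Y) X with h_aA
  set bA := Finset.filter (fun z => z ∉ X ∧ z ∉ Y) X' with h_bA
  set cA := Finset.filter (fun z => z ∈ X' ∧ z ∉ Y) X with h_cA
  set dA := Finset.filter (fun z => z ∉ X ∧ z ∉ X') Y with h_dA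
  set eA := Finset.filter (fun z => z ∉ X' ∧ z ∈ Y) X with h_eA
  set fA := Finset.filter (fun z => z ∉ X ∧ z ∈ Y) X' with h_fA
  set gA := Finset.filter (fun z => z ∈ X' ∧ z ∈ Y) X with h_gA
  have hXY : X \ Y = aA ∪ cA := by
    ext z
    simp only [Finset.mem_sdiff, Finset.mem_union, Finset.mem_inter,
      Finset.mem_filter, Finset.mem_symmDiff, h_aA, h_cA]
    tauto
  have hYX : Y \ X = dA ∪ fA := by
    ext z
    simp only [Finset.mem_sdiff, Finset.mem_union, Finset.mem_inter,
      Finset.mem_filter, Finset.mem_symmDiff, h_dA, h_fA]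
    tauto
  have hXiY : X ∩ Y = eA ∪ gA := by
    ext z
    simp only [Finset.mem_sdiff, Finset.mem_union, Finset.mem_inter,
      Finset.mem_filter, Finset.mem_symmDiff, h_eA, h_gA]
    tauto
  have hX'Y : X' \ Y = bA ∪ cA := by
    ext z
    simp only [Finset.mem_sdiff, Finset.mem_union, Finset.mem_inter,
      Finset.mem_filter, Finset.mem_symmDiff, h_bA, h_cA]
    tauto
  have hYX' : Y \ X' = dA ∪ eA := by
    ext z
    simp only [Finset.mem_sdiff, Finset.mem_union, Finset.mem_inter,
      Finset.mem_filter, Finset.mem_symmDiff, h_dA, h_eA]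
    tauto
  have hX'iY : X' ∩ Y = fA ∪ gA := by
    ext z
    simp only [Finset.mem_sdiff, Finset.mem_union, Finset.mem_inter,
      Finset.mem_filter, Finset.mem_symmDiff, h_fA, h_gA]
    tauto
  have hDY : symmDiff X X' \ Y = aA ∪ bA := by
    ext z
    simp only [Finset.mem_sdiff, Finset.mem_union, Finset.mem_inter,
      Finset.mem_filter, Finset.mem_symmDiff, h_aA, h_bA]
    tauto
  have hYD : Y \ symmDiff X X' = dA ∪ gA := by
    ext z
    simp only [Finset.mem_sdiff, Finset.mem_union, Finset.mem_inter,
      Finset.mem_filter, Finset.mem_symmDiff, h_dA, h_gA]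
    tauto
  have hDiY : symmDiff X X' ∩ Y = eA ∪ fA := by
    ext z
    simp only [Finset.mem_sdiff, Finset.mem_union, Finset.mem_inter,
      Finset.mem_filter, Finset.mem_symmDiff, h_eA, h_fA]
    tauto
  have hXfull : X = aA ∪ cA ∪ eA ∪ gA := by
    ext z
    simp only [Finset.mem_sdiff, Finset.mem_union, Finset.mem_inter,
      Finset.mem_filter, Finset.mem_symmDiff, h_aA, h_cA, h_eA, h_gA]
    tauto
  have hX'full : X' = bA ∪ cA ∪ fA ∪ gA := by
    ext z
    simp only [Finset.mem_sdiff, Finset.mem_union, Finset.mem_inter,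
      Finset.mem_filter, Finset.mem_symmDiff, h_bA, h_cA, h_fA, h_gA]
    tauto
  have hDfull : symmDiff X X' = aA ∪ bA ∪ eA ∪ fA := by
    ext z
    simp only [Finset.mem_sdiff, Finset.mem_union, Finset.mem_inter,
      Finset.mem_filter, Finset.mem_symmDiff, h_aA, h_bA, h_eA, h_fA]
    tauto
  have djab : Disjoint aA bA := by
    rw [Finset.disjoint_left]
    intro z hz1 hz2
    simp only [Finset.mem_filter, h_aA, h_bA] at hz1 hz2
    tauto
  have djac : Disjoint aA cA := by
    rw [Finset.disjoint_left]
    intro z hz1 hz2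
    simp only [Finset.mem_filter, h_aA, h_cA] at hz1 hz2
    tauto
  have djae : Disjoint aA eA := by
    rw [Finset.disjoint_left]
    intro z hz1 hz2
    simp only [Finset.mem_filter, h_aA, h_eA] at hz1 hz2
    tauto
  have djaf : Disjoint aA fA := by
    rw [Finset.disjoint_left]
    intro z hz1 hz2
    simp only [Finset.mem_filter, h_aA, h_fA] at hz1 hz2
    tauto
  have djag : Disjoint aA gA := by
    rw [Finset.disjoint_left]
    intro z hz1 hz2
    simp only [Finset.mem_filter, h_aA, h_gA] at hz1 hz2
    tauto
  have djbc : Disjoint bA cA := by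
    rw [Finset.disjoint_left]
    intro z hz1 hz2
    simp only [Finset.mem_filter, h_bA, h_cA] at hz1 hz2
    tauto
  have djbe : Disjoint bA eA := by
    rw [Finset.disjoint_left]
    intro z hz1 hz2
    simp only [Finset.mem_filter, h_bA, h_eA] at hz1 hz2
    tauto
  have djbf : Disjoint bA fA := by
    rw [Finset.disjoint_left]
    intro z hz1 hz2
    simp only [Finset.mem_filter, h_bA, h_fA] at hz1 hz2
    tauto
  have djbg : Disjoint bA gA := by
    rw [Finset.disjoint_left]
    intro z hz1 hz2
    simp only [Finset.mem_filter, h_bA, h_gA] at hz1 hz2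
    tauto
  have djce : Disjoint cA eA := by
    rw [Finset.disjoint_left]
    intro z hz1 hz2
    simp only [Finset.mem_filter, h_cA, h_eA] at hz1 hz2
    tauto
  have djcf : Disjoint cA fA := by
    rw [Finset.disjoint_left]
    intro z hz1 hz2
    simp only [Finset.mem_filter, h_cA, h_fA] at hz1 hz2
    tauto
  have djcg : Disjoint cA gA := by
    rw [Finset.disjoint_left]
    intro z hz1 hz2
    simp only [Finset.mem_filter, h_cA, h_gA] at hz1 hz2
    tauto
  have djde : Disjoint dA eA := by
    rw [Finset.disjoint_left]
    intro z hz1 hz2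
    simp only [Finset.mem_filter, h_dA, h_eA] at hz1 hz2
    tauto
  have djdf : Disjoint dA fA := by
    rw [Finset.disjoint_left]
    intro z hz1 hz2
    simp only [Finset.mem_filter, h_dA, h_fA] at hz1 hz2
    tauto
  have djdg : Disjoint dA gA := by
    rw [Finset.disjoint_left]
    intro z hz1 hz2
    simp only [Finset.mem_filter, h_dA, h_gA] at hz1 hz2
    tauto
  have djef : Disjoint eA fA := by
    rw [Finset.disjoint_left]
    intro z hz1 hz2
    simp only [Finset.mem_filter, h_eA, h_fA] at hz1 hz2
    tauto
  have djeg : Disjoint eA gA := by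
    rw [Finset.disjoint_left]
    intro z hz1 hz2
    simp only [Finset.mem_filter, h_eA, h_gA] at hz1 hz2
    tauto
  have djfg : Disjoint fA gA := by
    rw [Finset.disjoint_left]
    intro z hz1 hz2
    simp only [Finset.mem_filter, h_fA, h_gA] at hz1 hz2
    tauto
  rw [hDY, hYD, hDiY, hXY, hYX, hXiY, hX'Y, hYX', hX'iY,
    congrArg eta hDfull, congrArg eta hXfull, congrArg eta hX'full]
  rw [n1_uu aA bA dA gA djab djdg, n1_uu eA fA aA bA djef djab, n1_uu eA fA dA gA djef djdg,
    n1_uu aA cA dA fA djac djdf, n1_uu eA gA aA cA djeg djac, n1_uu eA gA dA fA djeg djdf,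
    n1_uu bA cA dA eA djbc djde, n1_uu fA gA bA cA djfg djbc, n1_uu fA gA dA eA djfg djde,
    eta_union4 aA bA eA fA djab djae djaf djbe djbf djef,
    eta_union4 aA cA eA gA djac djae djag djce djcg djeg,
    eta_union4 bA cA fA gA djbc djbf djbg djcf djcg djfg]
  repeat rw [← Nat.cast_add]
  apply cast_parity
  omega

lemma slice_right {A : Type*} [LinearOrder A] (X Y Y' : Finset A) :
    n1 (X \ symmDiff Y Y') (symmDiff Y Y' \ X) + n1 (X ∩ symmDiff Y Y') (X \ symmDiff Y Y') +
        n1 (X ∩ symmDiff Y Y') (symmDiff Y Y' \ X) + eta X =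
      n1 (X \ Y) (Y \ X) + n1 (X ∩ Y) (X \ Y) + n1 (X ∩ Y) (Y \ X) + eta X +
        (n1 (X \ Y') (Y' \ X) + n1 (X ∩ Y') (X \ Y') + n1 (X ∩ Y') (Y' \ X) + eta X) := by
  classical
  set aA := Finset.filter (fun z => z ∉ Y ∧ z ∉ Y') X with h_aA
  set dA := Finset.filter (fun z => z ∉ X ∧ z ∉ Y') Y with h_dA
  set pA := Finset.filter (fun z => z ∉ X ∧ z ∉ Y) Y' with h_pA
  set fA := Finset.filter (fun z => z ∈ Y ∧ z ∉ Y') X with h_fA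
  set qA := Finset.filter (fun z => z ∉ Y ∧ z ∈ Y') X with h_qA
  set wA := Finset.filter (fun z => z ∉ X ∧ z ∈ Y') Y with h_wA
  set gA := Finset.filter (fun z => z ∈ Y ∧ z ∈ Y') X with h_gA
  have hXE : X \ symmDiff Y Y' = aA ∪ gA := by
    ext z
    simp only [Finset.mem_sdiff, Finset.mem_union, Finset.mem_inter,
      Finset.mem_filter, Finset.mem_symmDiff, h_aA, h_gA]
    tauto
  have hEX : symmDiff Y Y' \ X = dA ∪ pA := by
    ext z
    simp only [Finset.mem_sdiff, Finset.mem_union, Finset.mem_inter,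
      Finset.mem_filter, Finset.mem_symmDiff, h_dA, h_pA]
    tauto
  have hXiE : X ∩ symmDiff Y Y' = fA ∪ qA := by
    ext z
    simp only [Finset.mem_sdiff, Finset.mem_union, Finset.mem_inter,
      Finset.mem_filter, Finset.mem_symmDiff, h_fA, h_qA]
    tauto
  have hXY : X \ Y = aA ∪ qA := by
    ext z
    simp only [Finset.mem_sdiff, Finset.mem_union, Finset.mem_inter,
      Finset.mem_filter, Finset.mem_symmDiff, h_aA, h_qA]
    tauto
  have hYX : Y \ X = dA ∪ wA := by
    ext z
    simp only [Finset.mem_sdiff, Finset.mem_union, Finset.mem_inter,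
      Finset.mem_filter, Finset.mem_symmDiff, h_dA, h_wA]
    tauto
  have hXiY : X ∩ Y = fA ∪ gA := by
    ext z
    simp only [Finset.mem_sdiff, Finset.mem_union, Finset.mem_inter,
      Finset.mem_filter, Finset.mem_symmDiff, h_fA, h_gA]
    tauto
  have hXY' : X \ Y' = aA ∪ fA := by
    ext z
    simp only [Finset.mem_sdiff, Finset.mem_union, Finset.mem_inter,
      Finset.mem_filter, Finset.mem_symmDiff, h_aA, h_fA]
    tauto
  have hY'X : Y' \ X = pA ∪ wA := by
    ext z
    simp only [Finset.mem_sdiff, Finset.mem_union, Finset.mem_inter,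
      Finset.mem_filter, Finset.mem_symmDiff, h_pA, h_wA]
    tauto
  have hXiY' : X ∩ Y' = qA ∪ gA := by
    ext z
    simp only [Finset.mem_sdiff, Finset.mem_union, Finset.mem_inter,
      Finset.mem_filter, Finset.mem_symmDiff, h_qA, h_gA]
    tauto
  have hXfull : X = aA ∪ fA ∪ qA ∪ gA := by
    ext z
    simp only [Finset.mem_sdiff, Finset.mem_union, Finset.mem_inter,
      Finset.mem_filter, Finset.mem_symmDiff, h_aA, h_fA, h_qA, h_gA]
    tauto
  have djaf : Disjoint aA fA := by
    rw [Finset.disjoint_left]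
    intro z hz1 hz2
    simp only [Finset.mem_filter, h_aA, h_fA] at hz1 hz2
    tauto
  have djag : Disjoint aA gA := by
    rw [Finset.disjoint_left]
    intro z hz1 hz2
    simp only [Finset.mem_filter, h_aA, h_gA] at hz1 hz2
    tauto
  have djaq : Disjoint aA qA := by
    rw [Finset.disjoint_left]
    intro z hz1 hz2
    simp only [Finset.mem_filter, h_aA, h_qA] at hz1 hz2
    tauto
  have djdp : Disjoint dA pA := by
    rw [Finset.disjoint_left]
    intro z hz1 hz2
    simp only [Finset.mem_filter, h_dA, h_pA] at hz1 hz2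
    tauto
  have djdw : Disjoint dA wA := by
    rw [Finset.disjoint_left]
    intro z hz1 hz2
    simp only [Finset.mem_filter, h_dA, h_wA] at hz1 hz2
    tauto
  have djfg : Disjoint fA gA := by
    rw [Finset.disjoint_left]
    intro z hz1 hz2
    simp only [Finset.mem_filter, h_fA, h_gA] at hz1 hz2
    tauto
  have djfq : Disjoint fA qA := by
    rw [Finset.disjoint_left]
    intro z hz1 hz2
    simp only [Finset.mem_filter, h_fA, h_qA] at hz1 hz2
    tauto
  have djpw : Disjoint pA wA := by
    rw [Finset.disjoint_left]
    intro z hz1 hz2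
    simp only [Finset.mem_filter, h_pA, h_wA] at hz1 hz2
    tauto
  have djqg : Disjoint qA gA := by
    rw [Finset.disjoint_left]
    intro z hz1 hz2
    simp only [Finset.mem_filter, h_qA, h_gA] at hz1 hz2
    tauto
  rw [hXE, hEX, hXiE, hXY, hYX, hXiY, hXY', hY'X, hXiY',
    congrArg eta hXfull]
  rw [n1_uu aA gA dA pA djag djdp, n1_uu fA qA aA gA djfq djag, n1_uu fA qA dA pA djfq djdp,
    n1_uu aA qA dA wA djaq djdw, n1_uu fA gA aA qA djfg djaq, n1_uu fA gA dA wA djfg djdw,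
    n1_uu aA fA pA wA djaf djpw, n1_uu qA gA aA fA djqg djaf, n1_uu qA gA pA wA djqg djpw,
    eta_union4 aA fA qA gA djaf djaq djag djfq djfg djqg]
  repeat rw [← Nat.cast_add]
  apply cast_parity
  omega


section Slice

lemma mem_sliceAt {A B : Type*} [DecidableEq A] [DecidableEq B]
    {x : Finset (A × B)} {b : B} {a : A} : a ∈ sliceAt x b ↔ (a, b) ∈ x := by
  simp only [sliceAt, Finset.mem_image, Finset.mem_filter]
  constructor
  · rintro ⟨⟨u, v⟩, ⟨hu, rfl⟩, rfl⟩
    exact hu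
  · intro h
    exact ⟨(a, b), ⟨h, rfl⟩, rfl⟩

variable {A B : Type*} [DecidableEq A] [DecidableEq B]

lemma sliceAt_sdiff (x y : Finset (A × B)) (b : B) :
    sliceAt (x \ y) b = sliceAt x b \ sliceAt y b := by
  ext a
  simp [mem_sliceAt, Finset.mem_sdiff]

lemma sliceAt_inter (x y : Finset (A × B)) (b : B) :
    sliceAt (x ∩ y) b = sliceAt x b ∩ sliceAt y b := by
  ext a
  simp [mem_sliceAt, Finset.mem_inter]

lemma sliceAt_symmDiff (x y : Finset (A × B)) (b : B) :
    sliceAt (symmDiff x y) b = symmDiff (sliceAt x b) (sliceAt y b) := by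
  ext a
  simp [mem_sliceAt, Finset.mem_symmDiff]

end Slice

/-- Lemma 4.3 of the paper: `d̃` is biadditive with respect to symmetric difference. -/
theorem dTilde_biadditive (A B : Type*) [LinearOrder A] [DecidableEq B]
    (x x' y y' : Finset (A × B)) :
    dTilde (symmDiff x x') y = dTilde x y + dTilde x' y ∧
    dTilde x (symmDiff y y') = dTilde x y + dTilde x y' := by
  classical
  constructor
  · ext bb
    rw [Finsupp.add_apply]
    simp only [dTilde, Finsupp.onFinset_apply, n3Fun]
    simp only [sliceAt_sdiff, sliceAt_inter, sliceAt_symmDiff]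
    have := slice_left (sliceAt x bb) (sliceAt x' bb) (sliceAt y bb)
    linear_combination this
  · ext bb
    rw [Finsupp.add_apply]
    simp only [dTilde, Finsupp.onFinset_apply, n3Fun]
    simp only [sliceAt_sdiff, sliceAt_inter, sliceAt_symmDiff]
    have := slice_right (sliceAt x bb) (sliceAt y bb) (sliceAt y' bb)
    linear_combination this
end

section
/- Let π be a group. Let St(ℤ[π]) be the group presented by generators e_{ij}^u, for i ≠ j in ℕ and u ∈ π, subject to the relators: (1) [e_{ij}^u, e_{kℓ}^v] whenever i ≠ ℓ, j ≠ k, and (i,j,u) ≠ (k,ℓ,v); (2) e_{ij}^u·e_{jk}^v·(e_{ij}^u)⁻¹·(e_{ik}^{uv})⁻¹·(e_{jk}^v)⁻¹ for i, j, k distinct; (3) e_{jk}^v·e_{ik}^{uv}·e_{ij}^u·(e_{jk}^v)⁻¹·(e_{ij}^u)⁻¹ for i, j, k distinct. Let W(±π) be the presented group of Definition 5.2 (generators w_{ij}(u) with relators (1)–(5) as listed there). Then there exists a group homomorphism h : W(±π) → St(ℤ[π]) with h(w_{ij}(u)) = e_{ij}^u · (e_{ji}^{u⁻¹})⁻¹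 · e_{ij}^u for all i ≠ j in ℕ and all u ∈ π. -/
/-- Index type for the generators `w_{ij}(u)`, `i ≠ j ∈ ℕ`, `u ∈ π`, of `W(±π)`. -/
def WGen (π : Type*) : Type _ := {p : ℕ × ℕ // p.1 ≠ p.2} × π

/-- The generator `w_{ij}(u)` as an element of the free group on `WGen π`. -/
def w {π : Type*} (i j : ℕ) (hij : i ≠ j) (u : π) : FreeGroup (WGen π) :=
  FreeGroup.of (⟨(i, j), hij⟩, u)

/-- The relators (1)–(5) of Definition 5.2 of the paper. -/
def WRels (π : Type*) [Group π] : Set (FreeGroup (WGen π)) :=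
  {z | (∃ (i j k l : ℕ) (u v : π) (hij : i ≠ j) (hkl : k ≠ l),
          i ≠ k ∧ i ≠ l ∧ j ≠ k ∧ j ≠ l ∧
          z = w i j hij u * w k l hkl v * (w i j hij u)⁻¹ * (w k l hkl v)⁻¹) ∨
       (∃ (i j k : ℕ) (u v : π) (hij : i ≠ j) (hik : i ≠ k) (hjk : j ≠ k),
          z = w i j hij u * w i k hik v * (w i j hij u)⁻¹ * w j k hjk (u⁻¹ * v)) ∨
       (∃ (i j k : ℕ) (u v : π) (hij : i ≠ j) (hik : i ≠ k) (hjk : j ≠ k),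
          z = w i j hij u * w k i (Ne.symm hik) v * (w i j hij u)⁻¹ *
              w k j (Ne.symm hjk) (v * u)) ∨
       (∃ (i j k : ℕ) (u v : π) (hij : i ≠ j) (hik : i ≠ k) (hjk : j ≠ k),
          z = w i j hij u * w j k hjk v * (w i j hij u)⁻¹ * (w i k hik (u * v))⁻¹) ∨
       (∃ (i j k : ℕ) (u v : π) (hij : i ≠ j) (hik : i ≠ k) (hjk : j ≠ k),
          z = w i j hij u * w k j (Ne.symm hjk) v * (w i j hij u)⁻¹ *
              (w k i (Ne.symm hik) (v * u⁻¹))⁻¹)}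

/-- Index type for the generators `e_{ij}^u`, `i ≠ j ∈ ℕ`, `u ∈ π`, of the
Steinberg group `St(ℤ[π])`. -/
def StGen (π : Type*) : Type _ := {p : ℕ × ℕ // p.1 ≠ p.2} × π

/-- The generator `e_{ij}^u` as an element of the free group on `StGen π`. -/
def e {π : Type*} (i j : ℕ) (hij : i ≠ j) (u : π) : FreeGroup (StGen π) :=
  FreeGroup.of (⟨(i, j), hij⟩, u)

/-- The relators (1)–(3) of Definition 2.1 of the paper for `St(ℤ[π])`. -/
def StRels (π : Type*) [Group π] : Set (FreeGroup (StGen π)) :=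
  {z | (∃ (i j k l : ℕ) (u v : π) (hij : i ≠ j) (hkl : k ≠ l),
          i ≠ l ∧ j ≠ k ∧ ¬(i = k ∧ j = l ∧ u = v) ∧
          z = e i j hij u * e k l hkl v * (e i j hij u)⁻¹ * (e k l hkl v)⁻¹) ∨
       (∃ (i j k : ℕ) (u v : π) (hij : i ≠ j) (hik : i ≠ k) (hjk : j ≠ k),
          z = e i j hij u * e j k hjk v * (e i j hij u)⁻¹ * (e i k hik (u * v))⁻¹ *
              (e j k hjk v)⁻¹) ∨
       (∃ (i j k : ℕ) (u v : π) (hij : i ≠ j) (hik : i ≠ k) (hjk : j ≠ k),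
          z = e j k hjk v * e i k hik (u * v) * e i j hij u * (e j k hjk v)⁻¹ *
              (e i j hij u)⁻¹)}

namespace WtoStAux

variable {G : Type*} [Group G]

lemma conj_ABA (A B g : G) :
    (A * B⁻¹ * A) * g * (A * B⁻¹ * A)⁻¹ = A * (B⁻¹ * (A * g * A⁻¹) * B) * A⁻¹ := by
  group

lemma conj_mul (a x y : G) : a * (x * y) * a⁻¹ = (a * x * a⁻¹) * (a * y * a⁻¹) := by group

lemma conj_inv (a x : G) : a * x⁻¹ * a⁻¹ = (a * x * a⁻¹)⁻¹ := by group

lemma mconj_mul (a x y : G) : a⁻¹ * (x * y) * a = (a⁻¹ * x * a) * (a⁻¹ * y * a) := by group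

lemma mconj_inv (a x : G) : a⁻¹ * x⁻¹ * a = (a⁻¹ * x * a)⁻¹ := by group

lemma conj_inv_helper {a x y : G} (h : a * y * a⁻¹ = x) : a⁻¹ * x * a = y := by
  rw [← h]; group

lemma comm_conj {a x : G} (h : Commute a x) : a * x * a⁻¹ = x := by
  rw [h.eq]; group

lemma comm_conj_inv {a x : G} (h : Commute a x) : a⁻¹ * x * a = x := by
  have := comm_conj h.inv_left
  rwa [inv_inv] at this

lemma comm_sandwich {a x : G} (h : Commute a x) : x⁻¹ * a * x = a := comm_conj_inv h.symm

lemma semiconj_helper {a b c : G} (h1 : b * a = a * c * b) (hc : a * c = c * a) :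
    a * b * a⁻¹ = c⁻¹ * b := by
  rw [mul_inv_eq_iff_eq_mul, mul_assoc, eq_inv_mul_iff_mul_eq, ← mul_assoc, ← hc,
    ← h1]

end WtoStAux
namespace WtoStAux

variable {π : Type*} [Group π]

/-- The generator `e_{ij}^u` as an element of `St(ℤ[π])`. -/
def X (i j : ℕ) (hij : i ≠ j) (u : π) : PresentedGroup (StRels π) :=
  PresentedGroup.of (⟨(i, j), hij⟩, u)

lemma mk_e (i j : ℕ) (hij : i ≠ j) (u : π) :
    PresentedGroup.mk (StRels π) (e i j hij u) = X i j hij u := rfl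

lemma rel_one {r : FreeGroup (StGen π)} (hr : r ∈ StRels π) :
    PresentedGroup.mk (StRels π) r = 1 :=
  (QuotientGroup.eq_one_iff r).mpr (Subgroup.subset_normalClosure hr)

/-- Generators with disjoint enough indices commute. -/
lemma X_comm {i j k l : ℕ} (hij : i ≠ j) (hkl : k ≠ l) (hil : i ≠ l) (hjk : j ≠ k)
    (u v : π) : Commute (X i j hij u) (X k l hkl v) := by
  by_cases h : i = k ∧ j = l ∧ u = v
  · obtain ⟨rfl, rfl, rfl⟩ := h
    exact Commute.refl (X i j hij u)
  · have h1 := rel_one (π := π)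
      (Or.inl ⟨i, j, k, l, u, v, hij, hkl, hil, hjk, h, rfl⟩)
    simp only [map_mul, map_inv, mk_e] at h1
    have h2 := mul_inv_eq_one.mp h1
    exact mul_inv_eq_iff_eq_mul.mp h2

/-- `x_{ij}(u) x_{jk}(v) x_{ij}(u)⁻¹ = x_{ik}(uv) x_{jk}(v)`. -/
lemma L1 {i j k : ℕ} (hij : i ≠ j) (hik : i ≠ k) (hjk : j ≠ k) (u v : π) :
    X i j hij u * X j k hjk v * (X i j hij u)⁻¹ =
      X i k hik (u * v) * X j k hjk v := by
  have h1 := rel_one (π := π)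
    (Or.inr (Or.inl ⟨i, j, k, u, v, hij, hik, hjk, rfl⟩))
  simp only [map_mul, map_inv, mk_e] at h1
  have h2 := mul_inv_eq_one.mp h1
  have h3 := mul_inv_eq_iff_eq_mul.mp h2
  rw [h3]
  exact (X_comm hjk hik hjk (Ne.symm hik) v (u * v)).eq

/-- `x_{ij}(u) x_{ki}(v) x_{ij}(u)⁻¹ = x_{kj}(vu)⁻¹ x_{ki}(v)`. -/
lemma L2 {i j k : ℕ} (hij : i ≠ j) (hik : i ≠ k) (hjk : j ≠ k) (u v : π) :
    X i j hij u * X k i (Ne.symm hik) v * (X i j hij u)⁻¹ =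
      (X k j (Ne.symm hjk) (v * u))⁻¹ * X k i (Ne.symm hik) v := by
  have h1 := rel_one (π := π)
    (Or.inr (Or.inl ⟨k, i, j, v, u, Ne.symm hik, Ne.symm hjk, hij, rfl⟩))
  simp only [map_mul, map_inv, mk_e] at h1
  have h2 := mul_inv_eq_one.mp h1
  have h3 := mul_inv_eq_iff_eq_mul.mp h2
  -- h3 : b * a * b⁻¹ = a * c  with a = X i j u, b = X k i v, c = X k j (v*u)
  have h4 : X k i (Ne.symm hik) v * X i j hij u =
      X i j hij u * X k j (Ne.symm hjk) (v * u) * X k i (Ne.symm hik) v := by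
    rw [← h3]; group
  exact semiconj_helper h4 (X_comm hij (Ne.symm hjk) hij hjk u (v * u)).eq

/-- inverse conjugation version of `L1`. -/
lemma L1inv {i j k : ℕ} (hij : i ≠ j) (hik : i ≠ k) (hjk : j ≠ k) (u v : π) :
    (X i j hij u)⁻¹ * X j k hjk v * X i j hij u =
      (X i k hik (u * v))⁻¹ * X j k hjk v := by
  apply conj_inv_helper
  rw [conj_mul, conj_inv, comm_conj (X_comm hij hik hik (Ne.symm hij) u (u * v)),
    L1 hij hik hjk u v]
  group

/-- inverse conjugation version of `L2`. -/
lemma L2inv {i j k : ℕ} (hij : i ≠ j) (hik : i ≠ k) (hjk : j ≠ k) (u v : π) :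
    (X i j hij u)⁻¹ * X k i (Ne.symm hik) v * X i j hij u =
      X k j (Ne.symm hjk) (v * u) * X k i (Ne.symm hik) v := by
  apply conj_inv_helper
  rw [conj_mul, comm_conj (X_comm hij (Ne.symm hjk) hij hjk u (v * u)),
    L2 hij hik hjk u v]
  group

end WtoStAux
namespace WtoStAux

variable {π : Type*} [Group π]

lemma cancel_aux {G : Type*} [Group G] (p q : G) : (q * p)⁻¹ * q = p⁻¹ := by group

/-- The image `W_{ij}(u) = x_{ij}(u) x_{ji}(u⁻¹)⁻¹ x_{ij}(u)` of `w_{ij}(u)`. -/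
def Wst (i j : ℕ) (hij : i ≠ j) (u : π) : PresentedGroup (StRels π) :=
  X i j hij u * (X j i (Ne.symm hij) u⁻¹)⁻¹ * X i j hij u

lemma Wst_def (i j : ℕ) (hij : i ≠ j) (u : π) :
    Wst i j hij u = X i j hij u * (X j i (Ne.symm hij) u⁻¹)⁻¹ * X i j hij u := rfl

/-- `W_{ij}(u) x_{jk}(v) W_{ij}(u)⁻¹ = x_{ik}(uv)`. -/
lemma Wconj_jk {i j k : ℕ} (hij : i ≠ j) (hik : i ≠ k) (hjk : j ≠ k) (u v : π) :
    Wst i j hij u * X j k hjk v * (Wst i j hij u)⁻¹ = X i k hik (u * v) := by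
  rw [Wst_def, conj_ABA, L1 hij hik hjk u v, mconj_mul,
    L1inv (Ne.symm hij) hjk hik u⁻¹ (u * v),
    comm_conj_inv (X_comm (Ne.symm hij) hjk hjk hij u⁻¹ v),
    inv_mul_cancel_left]
  rw [mul_assoc, comm_sandwich (X_comm hik hjk hik (Ne.symm hjk) (u * v) v)]
  exact comm_conj (X_comm hij hik hik (Ne.symm hij) u (u * v))

/-- `W_{ij}(u) x_{ik}(v) W_{ij}(u)⁻¹ = x_{jk}(u⁻¹v)⁻¹`. -/
lemma Wconj_ik {i j k : ℕ} (hij : i ≠ j) (hik : i ≠ k) (hjk : j ≠ k) (u v : π) :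
    Wst i j hij u * X i k hik v * (Wst i j hij u)⁻¹ = (X j k hjk (u⁻¹ * v))⁻¹ := by
  rw [Wst_def, conj_ABA, comm_conj (X_comm hij hik hik (Ne.symm hij) u v),
    L1inv (Ne.symm hij) hjk hik u⁻¹ v, conj_mul, conj_inv,
    L1 hij hik hjk u (u⁻¹ * v), mul_inv_cancel_left,
    comm_conj (X_comm hij hik hik (Ne.symm hij) u v),
    cancel_aux]

/-- `W_{ij}(u) x_{ki}(v) W_{ij}(u)⁻¹ = x_{kj}(vu)⁻¹`. -/
lemma Wconj_ki {i j k : ℕ} (hij : i ≠ j) (hik : i ≠ k) (hjk : j ≠ k) (u v : π) :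
    Wst i j hij u * X k i (Ne.symm hik) v * (Wst i j hij u)⁻¹ =
      (X k j (Ne.symm hjk) (v * u))⁻¹ := by
  rw [Wst_def, conj_ABA, L2 hij hik hjk u v, mconj_mul, mconj_inv,
    L2inv (Ne.symm hij) hjk hik u⁻¹ (v * u), mul_inv_cancel_right,
    comm_conj_inv (X_comm (Ne.symm hij) (Ne.symm hik) (Ne.symm hij) hik u⁻¹ v),
    cancel_aux, conj_inv,
    comm_conj (X_comm hij (Ne.symm hjk) hij hjk u (v * u))]

/-- `W_{ij}(u) x_{kj}(v) W_{ij}(u)⁻¹ = x_{ki}(vu⁻¹)`. -/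
lemma Wconj_kj {i j k : ℕ} (hij : i ≠ j) (hik : i ≠ k) (hjk : j ≠ k) (u v : π) :
    Wst i j hij u * X k j (Ne.symm hjk) v * (Wst i j hij u)⁻¹ =
      X k i (Ne.symm hik) (v * u⁻¹) := by
  rw [Wst_def, conj_ABA, comm_conj (X_comm hij (Ne.symm hjk) hij hjk u v),
    L2inv (Ne.symm hij) hjk hik u⁻¹ v, conj_mul, L2 hij hik hjk u (v * u⁻¹),
    inv_mul_cancel_right, comm_conj (X_comm hij (Ne.symm hjk) hij hjk u v),
    comm_sandwich (X_comm (Ne.symm hik) (Ne.symm hjk) (Ne.symm hjk) hik (v * u⁻¹) v)]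

/-- `W_{ij}(u)` fixes `x_{kl}(v)` for `k, l ∉ {i, j}`. -/
lemma Wconj_kl {i j k l : ℕ} (hij : i ≠ j) (hkl : k ≠ l) (hik : i ≠ k) (hil : i ≠ l)
    (hjk : j ≠ k) (hjl : j ≠ l) (u v : π) :
    Wst i j hij u * X k l hkl v * (Wst i j hij u)⁻¹ = X k l hkl v := by
  rw [Wst_def, conj_ABA, comm_conj (X_comm hij hkl hil hjk u v),
    comm_conj_inv (X_comm (Ne.symm hij) hkl hjl hik u⁻¹ v),
    comm_conj (X_comm hij hkl hil hjk u v)]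

end WtoStAux
namespace WtoStAux

variable {π : Type*} [Group π]

/-- Relator (1): disjoint `W`'s commute. -/
lemma R1 {i j k l : ℕ} (hij : i ≠ j) (hkl : k ≠ l) (hik : i ≠ k) (hil : i ≠ l)
    (hjk : j ≠ k) (hjl : j ≠ l) (u v : π) :
    Wst i j hij u * Wst k l hkl v * (Wst i j hij u)⁻¹ = Wst k l hkl v := by
  rw [Wst_def k l hkl v, conj_mul, conj_mul, conj_inv,
    Wconj_kl hij hkl hik hil hjk hjl u v,
    Wconj_kl hij (Ne.symm hkl) hil hik hjl hjk u v⁻¹]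

/-- Relator (2). -/
lemma R2 {i j k : ℕ} (hij : i ≠ j) (hik : i ≠ k) (hjk : j ≠ k) (u v : π) :
    Wst i j hij u * Wst i k hik v * (Wst i j hij u)⁻¹ =
      (Wst j k hjk (u⁻¹ * v))⁻¹ := by
  rw [Wst_def i k hik v, conj_mul, conj_mul, conj_inv,
    Wconj_ik hij hik hjk u v, Wconj_ki hij hik hjk u v⁻¹,
    Wst_def j k hjk (u⁻¹ * v)]
  have h : v⁻¹ * u = (u⁻¹ * v)⁻¹ := by group
  rw [h]
  group

/-- Relator (3). -/
lemma R3 {i j k : ℕ} (hij : i ≠ j) (hik : i ≠ k) (hjk : j ≠ k) (u v : π) :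
    Wst i j hij u * Wst k i (Ne.symm hik) v * (Wst i j hij u)⁻¹ =
      (Wst k j (Ne.symm hjk) (v * u))⁻¹ := by
  rw [Wst_def k i (Ne.symm hik) v, conj_mul, conj_mul, conj_inv,
    Wconj_ki hij hik hjk u v, Wconj_ik hij hik hjk u v⁻¹,
    Wst_def k j (Ne.symm hjk) (v * u)]
  have h : u⁻¹ * v⁻¹ = (v * u)⁻¹ := by group
  have e2 : X j k (Ne.symm (Ne.symm hjk)) ((v * u)⁻¹) = X j k hjk ((v * u)⁻¹) := rfl
  rw [h, e2]
  group

/-- Relator (4). -/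
lemma R4 {i j k : ℕ} (hij : i ≠ j) (hik : i ≠ k) (hjk : j ≠ k) (u v : π) :
    Wst i j hij u * Wst j k hjk v * (Wst i j hij u)⁻¹ = Wst i k hik (u * v) := by
  rw [Wst_def j k hjk v, conj_mul, conj_mul, conj_inv,
    Wconj_jk hij hik hjk u v, Wconj_kj hij hik hjk u v⁻¹,
    Wst_def i k hik (u * v)]
  have h : v⁻¹ * u⁻¹ = (u * v)⁻¹ := by group
  rw [h]

/-- Relator (5). -/
lemma R5 {i j k : ℕ} (hij : i ≠ j) (hik : i ≠ k) (hjk : j ≠ k) (u v : π) :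
    Wst i j hij u * Wst k j (Ne.symm hjk) v * (Wst i j hij u)⁻¹ =
      Wst k i (Ne.symm hik) (v * u⁻¹) := by
  rw [Wst_def k j (Ne.symm hjk) v, conj_mul, conj_mul, conj_inv,
    Wconj_kj hij hik hjk u v, Wconj_jk hij hik hjk u v⁻¹,
    Wst_def k i (Ne.symm hik) (v * u⁻¹)]
  have h : u * v⁻¹ = (v * u⁻¹)⁻¹ := by group
  have e1 : X i k (Ne.symm (Ne.symm hik)) ((v * u⁻¹)⁻¹) =
      X i k hik ((v * u⁻¹)⁻¹) := rfl
  rw [h, e1]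

/-- The map on generators. -/
def fW : WGen π → PresentedGroup (StRels π) := fun g => Wst g.1.1.1 g.1.1.2 g.1.2 g.2

lemma fW_apply (i j : ℕ) (hij : i ≠ j) (u : π) :
    fW ((⟨(i, j), hij⟩, u) : WGen π) = Wst i j hij u := rfl

/-- All relators of `W(±π)` die in `St(ℤ[π])`. -/
lemma lift_rels : ∀ r ∈ WRels π, FreeGroup.lift (fW (π := π)) r = 1 := by
  intro r hr
  rcases hr with ⟨i, j, k, l, u, v, hij, hkl, hik, hil, hjk, hjl, rfl⟩ |
    ⟨i, j, k, u, v, hij, hik, hjk, rfl⟩ | ⟨i, j, k, u, v, hij, hik, hjk, rfl⟩ |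
    ⟨i, j, k, u, v, hij, hik, hjk, rfl⟩ | ⟨i, j, k, u, v, hij, hik, hjk, rfl⟩
  · simp only [w, map_mul, map_inv, FreeGroup.lift_apply_of, fW_apply]
    rw [mul_inv_eq_one, mul_inv_eq_iff_eq_mul]
    have h := R1 hij hkl hik hil hjk hjl u v
    rw [mul_inv_eq_iff_eq_mul] at h
    exact h
  · simp only [w, map_mul, map_inv, FreeGroup.lift_apply_of, fW_apply]
    exact mul_eq_one_iff_eq_inv.mpr (R2 hij hik hjk u v)
  · simp only [w, map_mul, map_inv, FreeGroup.lift_apply_of, fW_apply]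
    exact mul_eq_one_iff_eq_inv.mpr (R3 hij hik hjk u v)
  · simp only [w, map_mul, map_inv, FreeGroup.lift_apply_of, fW_apply]
    exact mul_inv_eq_one.mpr (R4 hij hik hjk u v)
  · simp only [w, map_mul, map_inv, FreeGroup.lift_apply_of, fW_apply]
    exact mul_inv_eq_one.mpr (R5 hij hik hjk u v)

end WtoStAux
/-- Lemma 5.6 of the paper: there is a homomorphism `h : W(±π) → St(ℤ[π])` with
`h(w_{ij}(u)) = e_{ij}^u · (e_{ji}^{u⁻¹})⁻¹ · e_{ij}^u`. -/
theorem W_to_St_exists (π : Type*) [Group π] :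
    ∃ h : PresentedGroup (WRels π) →* PresentedGroup (StRels π),
      ∀ (i j : ℕ) (hij : i ≠ j) (u : π),
        h (PresentedGroup.of (⟨(i, j), hij⟩, u)) =
          (PresentedGroup.of (⟨(i, j), hij⟩, u) : PresentedGroup (StRels π)) *
            ((PresentedGroup.of (⟨(j, i), Ne.symm hij⟩, u⁻¹) : PresentedGroup (StRels π)))⁻¹ *
            (PresentedGroup.of (⟨(i, j), hij⟩, u) : PresentedGroup (StRels π)) := by
  refine ⟨PresentedGroup.toGroup WtoStAux.lift_rels, ?_⟩
  intro i j hij u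
  erw [PresentedGroup.toGroup.of]
  rfl
end

section
/- Let R be a commutative ring and let T be the set of 4 × 4 upper triangular matrices over R with all diagonal entries equal to 1 and with (3,4)-entry equal to 0 (indices written 1,2,3,4). Then T is closed under matrix multiplication, and the function f : T × T → R defined by f(X,Y) = −X₂₃·Y₁₄ − X₂₃·X₁₂·Y₂₄ + X₁₃·Y₂₄ satisfies the 2-cocycle identity f(Y,Z) − f(X*Y, Z) + f(X, Y*Z) − f(X,Y) = 0 for all X, Y, Z ∈ T. -/
/-- Unitriangular 4×4 matrices (1-indexed 1,2,3,4 = 0-indexed 0,1,2,3) with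
vanishing (3,4)-entry (0-indexed (2,3)-entry). -/
def UT34 {R : Type*} [CommRing R] (X : Matrix (Fin 4) (Fin 4) R) : Prop :=
  (∀ i j : Fin 4, j < i → X i j = 0) ∧ (∀ i : Fin 4, X i i = 1) ∧ X 2 3 = 0

/-- The factor set `f(X,Y) = −X₂₃·Y₁₄ − X₂₃·X₁₂·Y₂₄ + X₁₃·Y₂₄` (1-indexed). -/
def f34 {R : Type*} [CommRing R] (X Y : Matrix (Fin 4) (Fin 4) R) : R :=
  -(X 1 2 * Y 0 3) - X 1 2 * X 0 1 * Y 1 3 + X 0 2 * Y 1 3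

/-- The set `T₃₄` is closed under multiplication, and `f34` satisfies the
2-cocycle identity on it. -/
theorem UT34_closed_and_cocycle (R : Type*) [CommRing R] :
    (∀ X Y : Matrix (Fin 4) (Fin 4) R, UT34 X → UT34 Y → UT34 (X * Y)) ∧
    (∀ X Y Z : Matrix (Fin 4) (Fin 4) R, UT34 X → UT34 Y → UT34 Z →
      f34 Y Z - f34 (X * Y) Z + f34 X (Y * Z) - f34 X Y = 0) := by
  constructor
  · rintro X Y ⟨hX1, hX2, hX3⟩ ⟨hY1, hY2, hY3⟩
    have x10 := hX1 1 0 (by decide); have x20 := hX1 2 0 (by decide)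
    have x21 := hX1 2 1 (by decide); have x30 := hX1 3 0 (by decide)
    have x31 := hX1 3 1 (by decide); have x32 := hX1 3 2 (by decide)
    have y10 := hY1 1 0 (by decide); have y20 := hY1 2 0 (by decide)
    have y21 := hY1 2 1 (by decide); have y30 := hY1 3 0 (by decide)
    have y31 := hY1 3 1 (by decide); have y32 := hY1 3 2 (by decide)
    have x00 := hX2 0; have x11 := hX2 1; have x22 := hX2 2; have x33 := hX2 3
    have y00 := hY2 0; have y11 := hY2 1; have y22 := hY2 2; have y33 := hY2 3
    refine ⟨fun i j hij => ?_, fun i => ?_, ?_⟩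
    · fin_cases i <;> fin_cases j <;>
        first
        | exact absurd hij (by decide)
        | simp [Matrix.mul_apply, Fin.sum_univ_four, *]
    · fin_cases i <;> simp [Matrix.mul_apply, Fin.sum_univ_four, *]
    · simp [Matrix.mul_apply, Fin.sum_univ_four, *]
  · rintro X Y Z ⟨hX1, hX2, hX3⟩ ⟨hY1, hY2, hY3⟩ ⟨hZ1, hZ2, hZ3⟩
    have x10 := hX1 1 0 (by decide); have x20 := hX1 2 0 (by decide)
    have x21 := hX1 2 1 (by decide); have x30 := hX1 3 0 (by decide)
    have x31 := hX1 3 1 (by decide); have x32 := hX1 3 2 (by decide)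
    have y10 := hY1 1 0 (by decide); have y20 := hY1 2 0 (by decide)
    have y21 := hY1 2 1 (by decide); have y30 := hY1 3 0 (by decide)
    have y31 := hY1 3 1 (by decide); have y32 := hY1 3 2 (by decide)
    have z10 := hZ1 1 0 (by decide); have z20 := hZ1 2 0 (by decide)
    have z21 := hZ1 2 1 (by decide); have z30 := hZ1 3 0 (by decide)
    have z31 := hZ1 3 1 (by decide); have z32 := hZ1 3 2 (by decide)
    have x00 := hX2 0; have x11 := hX2 1; have x22 := hX2 2; have x33 := hX2 3
    have y00 := hY2 0; have y11 := hY2 1; have y22 := hY2 2; have y33 := hY2 3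
    have z00 := hZ2 0; have z11 := hZ2 1; have z22 := hZ2 2; have z33 := hZ2 3
    simp only [f34, Matrix.mul_apply, Fin.sum_univ_four, x10, x20, x21, x30,
      x31, x32, y10, y20, y21, y30, y31, y32, z10, z20, z21, z30, z31, z32,
      x00, x11, x22, x33, y00, y11, y22, y33, z00, z11, z22, z33, hX3, hY3, hZ3]
    ring
end

section
/- Let π be a group and let r, s be mutually inverse 4 × 4 matrices over Λ = MonoidAlgebra (ZMod 2) π (indices written 1,2,3,4), and let u, v, w ∈ π. Write E_{ij}(g) = 1 + (single g 1)·stdBasisMatrix i j. Set r' = r * E₁₂(u) and s' = E₁₂(u) * s (so r', s' are mutually inverse, since E₁₂(u)⁻¹ = E₁₂(u) in characteristic 2). Then Σ_p r' p 2 * ⟨v•(s' 3 p), w•(s' 4 p)⟩ = Σ_p r p 2 * ⟨v•(s 3 p), w•(s 4 p)⟩ + Σ_p r p 1 * ⟨(u*v)•(s 3 p), (u*w)•(s 4 p)⟩, as an identity in Λ. -/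
/-- The elementary matrix `E_{ij}(g) = 1 + (single g 1)·stdBasisMatrix i j`. -/
noncomputable def elemMat {π : Type*} [Group π] (i j : Fin 4) (g : π) :
    Matrix (Fin 4) (Fin 4) (MonoidAlgebra (ZMod 2) π) :=
  1 + Matrix.single i j (MonoidAlgebra.single g 1)

lemma interPairing_smul {π : Type*} [Group π] (g : π)
    (x y : MonoidAlgebra (ZMod 2) π) :
    interPairing (MonoidAlgebra.single g 1 * x) (MonoidAlgebra.single g 1 * y)
      = MonoidAlgebra.single g 1 * interPairing x y := by
  ext a
  simp [interPairing, MonoidAlgebra.coeff_single_mul_apply]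

/-- The identity `(2) = (1) + (3)` of Section 8.5 of the paper: the cocycle property
of the ghost labels `z_{2,34}^{v,w}` and `z_{1,34}^{uv,uw}` of the generalized
Grassmann invariant.  (Indices `1,2,3,4` in the paper are `0,1,2,3` here.) -/
theorem ghost_label_cocycle (π : Type*) [Group π]
    (r s : Matrix (Fin 4) (Fin 4) (MonoidAlgebra (ZMod 2) π))
    (hrs : r * s = 1) (hsr : s * r = 1) (u v w : π)
    (r' s' : Matrix (Fin 4) (Fin 4) (MonoidAlgebra (ZMod 2) π))
    (hr' : r' = r * elemMat 0 1 u) (hs' : s' = elemMat 0 1 u * s) :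
    (∑ p : Fin 4, r' p 1 *
      interPairing (MonoidAlgebra.single v 1 * s' 2 p) (MonoidAlgebra.single w 1 * s' 3 p)) =
    (∑ p : Fin 4, r p 1 *
      interPairing (MonoidAlgebra.single v 1 * s 2 p) (MonoidAlgebra.single w 1 * s 3 p)) +
    (∑ p : Fin 4, r p 0 *
      interPairing (MonoidAlgebra.single (u * v) 1 * s 2 p)
        (MonoidAlgebra.single (u * w) 1 * s 3 p)) := by
  subst hr' hs'
  have h2 : ∀ p, (elemMat 0 1 u * s) 2 p = s 2 p := by
    intro p
    simp [elemMat, Matrix.add_mul, Matrix.single_mul_apply_of_ne]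
  have h3 : ∀ p, (elemMat 0 1 u * s) 3 p = s 3 p := by
    intro p
    simp [elemMat, Matrix.add_mul, Matrix.single_mul_apply_of_ne]
  have hr : ∀ p, (r * elemMat 0 1 u) p 1
      = r p 1 + r p 0 * MonoidAlgebra.single u 1 := by
    intro p
    simp [elemMat, Matrix.mul_add, Matrix.mul_single_apply_same]
  simp only [h2, h3, hr]
  rw [← Finset.sum_add_distrib]
  refine Finset.sum_congr rfl fun p _ => ?_
  have : MonoidAlgebra.single (u * v) (1 : ZMod 2)
      = MonoidAlgebra.single u 1 * MonoidAlgebra.single v 1 := by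
    simp [MonoidAlgebra.single_mul_single]
  rw [this]
  have : MonoidAlgebra.single (u * w) (1 : ZMod 2)
      = MonoidAlgebra.single u 1 * MonoidAlgebra.single w 1 := by
    simp [MonoidAlgebra.single_mul_single]
  rw [this]
  rw [mul_assoc, mul_assoc, interPairing_smul]
  rw [add_mul, mul_assoc]
end

section
/- Let M be a monoid and let s₁, s₂, p₁, p₂, i₂ ∈ M satisfy the relations: p₁*i₂ = i₂*p₁, p₂*s₂ = s₂*p₂, s₂*s₁ = s₁*i₂*s₂, p₂*s₁ = s₁*p₁*p₂, p₁*s₂ = s₂*p₁, and i₂*p₂ = p₂*i₂. Then s₁*p₁*i₂*s₂*p₂ = p₂*s₂*s₁. -/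
/-- In the picture monoid `M(𝒢)` of the torsion class `𝒢 = Gen(P₁ ⊕ P₂)` for the
`A₃` quiver `1→2→3`, with generators `S₁,S₂,P₁,P₂,I₂` and the six defining
relations, the maximal green sequence `S₁,P₁,I₂,S₂,P₂` has product equal to the
Coxeter element `c = P₂S₂S₁`. -/
theorem picture_monoid_coxeter (M : Type*) [Monoid M] (s₁ s₂ p₁ p₂ i₂ : M)
    (h1 : p₁ * i₂ = i₂ * p₁)
    (h2 : p₂ * s₂ = s₂ * p₂)
    (h3 : s₂ * s₁ = s₁ * i₂ * s₂)
    (h4 : p₂ * s₁ = s₁ * p₁ * p₂)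
    (h5 : p₁ * s₂ = s₂ * p₁)
    (h6 : i₂ * p₂ = p₂ * i₂) :
    s₁ * p₁ * i₂ * s₂ * p₂ = p₂ * s₂ * s₁ := by
  symm
  calc p₂ * s₂ * s₁ = s₂ * p₂ * s₁ := by rw [h2]
    _ = s₂ * (s₁ * p₁ * p₂) := by rw [mul_assoc, h4]
    _ = s₂ * s₁ * p₁ * p₂ := by simp [mul_assoc]
    _ = s₁ * i₂ * s₂ * p₁ * p₂ := by rw [h3]
    _ = s₁ * i₂ * (p₁ * s₂) * p₂ := by rw [h5, ← mul_assoc]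
    _ = s₁ * (p₁ * i₂) * s₂ * p₂ := by rw [h1]; simp [mul_assoc]
    _ = s₁ * p₁ * i₂ * s₂ * p₂ := by simp [mul_assoc]
end
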